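/- arXiv:2107.06549 — 6 statements merged into one kernel-verified Lean document; each statement's English description precedes it below -/
import Mathlib

section
/- Let P and Q be convex polytopes in R^d such that P ∪ Q is convex, and let F be a k-dimensional face of P ∪ Q. Then there exists a k-dimensional face F' of P or of Q lying in the same k-dimensional affine subspace as F (i.e., aff F = aff F'). -/
/-!
A face of `P ∪ Q` is the union of a face of `P` and a face of `Q` (cut out by the same supporting
hyperplane), and it is convex. A convex set covered by two affine subspaces lies in one of them:
otherwise take `a` outside the first and `b` outside the second; their midpoint lies in one of the
two, and reflecting through it shows that this subspace also contains `a` or `b`. Applied to the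
affine hulls of the two pieces, this makes the affine hull of the face that of one of the pieces.
-/

open Pointwise

/-- A face of a set `P` (in the sense of convex polytopes): either `P` itself or the
intersection of `P` with a supporting hyperplane. -/
def IsFaceOf {d : ℕ} (F P : Set (EuclideanSpace ℝ (Fin d))) : Prop :=
  F = P ∨ ∃ (f : EuclideanSpace ℝ (Fin d) →ₗ[ℝ] ℝ) (c : ℝ), f ≠ 0 ∧
    (∀ x ∈ P, f x ≤ c) ∧ F = {x | x ∈ P ∧ f x = c}

/-- The dimension of a set: the dimension of its affine hull. -/
noncomputable def dimSet {d : ℕ} (F : Set (EuclideanSpace ℝ (Fin d))) : ℕ :=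
  Module.finrank ℝ (affineSpan ℝ F).direction

/-- A convex polytope: the convex hull of finitely many points. -/
def IsPolytope {d : ℕ} (P : Set (EuclideanSpace ℝ (Fin d))) : Prop :=
  ∃ S : Finset (EuclideanSpace ℝ (Fin d)), S.Nonempty ∧ P = convexHull ℝ (S : Set _)

section ConvexUnion

variable {𝕜 E : Type*} [Field 𝕜] [LinearOrder 𝕜] [IsStrictOrderedRing 𝕜]
  [AddCommGroup E] [Module 𝕜 E]

theorem AffineSubspace.mem_of_midpoint_mem {s : AffineSubspace 𝕜 E} {a b : E}
    (hm : midpoint 𝕜 a b ∈ s) (hb : b ∈ s) : a ∈ s := by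
  rw [← AffineEquiv.pointReflection_midpoint_left (R := 𝕜) b a, midpoint_comm,
    AffineEquiv.pointReflection_apply]
  exact vadd_mem_of_mem_direction (vsub_mem_direction hm hb) hm

theorem Convex.subset_or_subset_of_subset_union {C : Set E} (hC : Convex 𝕜 C)
    {s₁ s₂ : AffineSubspace 𝕜 E} (h : C ⊆ s₁ ∪ s₂) : C ⊆ s₁ ∨ C ⊆ s₂ := by
  by_contra! ⟨h₁, h₂⟩
  obtain ⟨a, haC, ha₁⟩ := Set.not_subset.1 h₁
  obtain ⟨b, hbC, hb₂⟩ := Set.not_subset.1 h₂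
  have ha₂ : a ∈ s₂ := (h haC).resolve_left ha₁
  have hb₁ : b ∈ s₁ := (h hbC).resolve_right hb₂
  rcases h (hC.midpoint_mem haC hbC) with hm | hm
  · exact ha₁ (s₁.mem_of_midpoint_mem hm hb₁)
  · rw [midpoint_comm] at hm
    exact hb₂ (s₂.mem_of_midpoint_mem hm ha₂)

theorem Convex.affineSpan_union_eq_or {A B : Set E} (hAB : Convex 𝕜 (A ∪ B)) :
    affineSpan 𝕜 (A ∪ B) = affineSpan 𝕜 A ∨ affineSpan 𝕜 (A ∪ B) = affineSpan 𝕜 B := by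
  have hcover : A ∪ B ⊆ affineSpan 𝕜 A ∪ affineSpan 𝕜 B :=
    Set.union_subset_union (subset_affineSpan 𝕜 A) (subset_affineSpan 𝕜 B)
  refine (hAB.subset_or_subset_of_subset_union hcover).imp (fun h ↦ ?_) (fun h ↦ ?_)
  · exact le_antisymm (affineSpan_le.2 h) (affineSpan_mono 𝕜 Set.subset_union_left)
  · exact le_antisymm (affineSpan_le.2 h) (affineSpan_mono 𝕜 Set.subset_union_right)

end ConvexUnion

namespace IsFaceOf

variable {d : ℕ} {F C P Q : Set (EuclideanSpace ℝ (Fin d))}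

theorem convex (hF : IsFaceOf F C) (hC : Convex ℝ C) : Convex ℝ F := by
  rcases hF with rfl | ⟨f, c, -, -, rfl⟩
  · exact hC
  · exact hC.inter (convex_hyperplane f.isLinear c)

theorem exists_eq_union_of_union (hF : IsFaceOf F (P ∪ Q)) :
    ∃ A B, IsFaceOf A P ∧ IsFaceOf B Q ∧ F = A ∪ B := by
  rcases hF with rfl | ⟨f, c, hf, hle, rfl⟩
  · exact ⟨P, Q, .inl rfl, .inl rfl, rfl⟩
  refine ⟨{x | x ∈ P ∧ f x = c}, {x | x ∈ Q ∧ f x = c},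
    .inr ⟨f, c, hf, fun x hx ↦ hle x (.inl hx), rfl⟩,
    .inr ⟨f, c, hf, fun x hx ↦ hle x (.inr hx), rfl⟩, ?_⟩
  ext x
  simp only [Set.mem_union, Set.mem_ofPred_eq]
  tauto

end IsFaceOf

theorem face_of_union_general {d k : ℕ} (P Q F : Set (EuclideanSpace ℝ (Fin d)))
    (hU : Convex ℝ (P ∪ Q))
    (hF : IsFaceOf F (P ∪ Q)) (hdim : dimSet F = k) :
    ∃ F' : Set (EuclideanSpace ℝ (Fin d)),
      (IsFaceOf F' P ∨ IsFaceOf F' Q) ∧ dimSet F' = k ∧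
      affineSpan ℝ F = affineSpan ℝ F' := by
  have hFconv := hF.convex hU
  obtain ⟨A, B, hA, hB, rfl⟩ := hF.exists_eq_union_of_union
  have dimSet_eq {F' : Set (EuclideanSpace ℝ (Fin d))}
      (h : affineSpan ℝ (A ∪ B) = affineSpan ℝ F') : dimSet F' = k := by
    rwa [dimSet, ← h]
  rcases hFconv.affineSpan_union_eq_or with h | h
  · exact ⟨A, .inl hA, dimSet_eq h, h⟩
  · exact ⟨B, .inr hB, dimSet_eq h, h⟩

/-- if `P ∪ Q` is convex and `F` is a `k`-dimensional face of `P ∪ Q`,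
then some `k`-dimensional face `F'` of `P` or of `Q` has the same affine hull as `F`. -/
theorem face_of_union {d k : ℕ} (P Q F : Set (EuclideanSpace ℝ (Fin d)))
    (hP : IsPolytope P) (hQ : IsPolytope Q) (hU : Convex ℝ (P ∪ Q))
    (hF : IsFaceOf F (P ∪ Q)) (hdim : dimSet F = k) :
    ∃ F' : Set (EuclideanSpace ℝ (Fin d)),
      (IsFaceOf F' P ∨ IsFaceOf F' Q) ∧ dimSet F' = k ∧
      affineSpan ℝ F = affineSpan ℝ F' :=
  face_of_union_general P Q F hU hF hdim
end

section
/- Let P and Q be convex polytopes in R^d such that P ∪ Q is convex, and let F be a k-dimensional face of P ∩ Q. Then there exists a k-dimensional face F' of P or of Q lying in the same k-dimensional affine subspace as F. -/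
/-!
For a convex set `C` and `x ∈ C`, let `L_C(x)` be the subspace of directions along which `x` can
move both ways inside `C`; then `C ∩ (x + L_C(x))` is the smallest face of `C` containing `x`, and
when `C` is a polytope this face is exposed: separate the hull of the vertices outside it from the
affine subspace `x + L_C(x)`.

Pick `x` in the relative interior of `F`, so that `aff F = x + L_F(x)`. As `F` is a face of
`P ∩ Q`, `L_F(x) = L_P(x) ⊓ L_Q(x)`. Convexity of `P ∪ Q` makes `L_P(x)` and `L_Q(x)` comparable:
for `u ∈ L_P(x) \ L_Q(x)` and `v ∈ L_Q(x) \ L_P(x)`, suitably scaled and signed, the segment from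
`x + u` to `x + v` meets `P ∩ Q` at some `x + w`, and `x - w` lies on the segment from `x - u` to
`x - v`, hence in `P` or in `Q`; either way `w`, and with it `v` or `u`, falls into the wrong
subspace. If `L_P(x) ≤ L_Q(x)`, then `L_F(x) = L_P(x)` and the smallest face of `P` containing `x`
spans the same affine subspace as `F`.
-/

open Pointwise

theorem AffineSubspace.apply_eq_of_forall_lt_apply {V : Type*} [AddCommGroup V] [Module ℝ V]
    (A : AffineSubspace ℝ V) (f : V →ₗ[ℝ] ℝ) {c : ℝ} (h : ∀ y ∈ A, c < f y) {x y : V}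
    (hx : x ∈ A) (hy : y ∈ A) : f y = f x := by
  by_contra hne
  have hyx : f (y - x) ≠ 0 := by rwa [map_sub, sub_ne_zero]
  have := h _ (A.vadd_mem_of_mem_direction
    (A.direction.smul_mem ((c - f x) / f (y - x)) (A.vsub_mem_direction hy hx)) hx)
  rw [vadd_eq_add, vsub_eq_sub, map_add, map_smul, smul_eq_mul, div_mul_cancel₀ _ hyx] at this
  linarith

open Set

namespace Convex

variable {V : Type*} [AddCommGroup V] [Module ℝ V] {P Q F : Set V} {x y u v : V}

def twoSidedDirections (hP : Convex ℝ P) (hx : x ∈ P) : Submodule ℝ V where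
  carrier := {u | ∃ ε : ℝ, 0 < ε ∧ ∀ t : ℝ, |t| ≤ ε → x + t • u ∈ P}
  zero_mem' := ⟨1, one_pos, fun t _ => by rwa [smul_zero, add_zero]⟩
  add_mem' := by
    rintro u v ⟨ε₁, hε₁, hu⟩ ⟨ε₂, hε₂, hv⟩
    refine ⟨min ε₁ ε₂ / 2, by positivity, fun t ht => ?_⟩
    have h2t : |2 * t| ≤ min ε₁ ε₂ := by rw [abs_mul, abs_two]; linarith
    have := hP (hu (2 * t) (h2t.trans (min_le_left _ _)))
      (hv (2 * t) (h2t.trans (min_le_right _ _)))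
      (by norm_num : (0 : ℝ) ≤ 1 / 2) (by norm_num : (0 : ℝ) ≤ 1 / 2) (by norm_num)
    convert this using 1
    module
  smul_mem' := by
    rintro c u ⟨ε, hε, hu⟩
    refine ⟨ε / (|c| + 1), by positivity, fun t ht => ?_⟩
    have : |t * c| ≤ ε := by
      rw [abs_mul]
      calc |t| * |c| ≤ ε / (|c| + 1) * (|c| + 1) := by gcongr; linarith [abs_nonneg c]
        _ = ε := div_mul_cancel₀ _ (by positivity)
    simpa [smul_smul] using hu (t * c) this

theorem exists_add_sub_mem_of_mem_twoSidedDirections {hP : Convex ℝ P} {hx : x ∈ P}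
    (hu : u ∈ hP.twoSidedDirections hx) : ∃ ε : ℝ, 0 < ε ∧ x + ε • u ∈ P ∧ x - ε • u ∈ P := by
  obtain ⟨ε, hε, hu⟩ := hu
  refine ⟨ε, hε, hu ε (abs_of_pos hε).le, ?_⟩
  simpa [sub_eq_add_neg] using hu (-ε) (by rw [abs_neg, abs_of_pos hε])

theorem mem_twoSidedDirections_of_add_smul_of_sub_smul (hP : Convex ℝ P) (hx : x ∈ P)
    {δ δ' : ℝ} (hδ : 0 < δ) (hδ' : 0 < δ') (hadd : x + δ • u ∈ P) (hsub : x - δ' • u ∈ P) :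
    u ∈ hP.twoSidedDirections hx := by
  refine ⟨min δ δ', lt_min hδ hδ', fun t ht => ?_⟩
  rcases le_or_gt 0 t with h0 | h0
  · have := hP.add_smul_mem hx hadd (t := t / δ)
      ⟨div_nonneg h0 hδ.le, (div_le_one hδ).2 ((le_abs_self t).trans (ht.trans (min_le_left _ _)))⟩
    rwa [smul_smul, div_mul_cancel₀ _ hδ.ne'] at this
  · have hsub' : x + -(δ' • u) ∈ P := by rwa [← sub_eq_add_neg]
    have := hP.add_smul_mem hx hsub' (t := -t / δ')
      ⟨div_nonneg (by linarith) hδ'.le,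
        (div_le_one hδ').2 ((neg_le_abs t).trans (ht.trans (min_le_right _ _)))⟩
    rwa [smul_neg, smul_smul, div_mul_cancel₀ _ hδ'.ne', neg_smul, neg_neg] at this

theorem mem_twoSidedDirections_of_add_of_sub (hP : Convex ℝ P) (hx : x ∈ P)
    (hadd : x + u ∈ P) (hsub : x - u ∈ P) : u ∈ hP.twoSidedDirections hx :=
  hP.mem_twoSidedDirections_of_add_smul_of_sub_smul hx one_pos one_pos
    (by rwa [one_smul]) (by rwa [one_smul])

theorem twoSidedDirections_mono {hP : Convex ℝ P} {hQ : Convex ℝ Q} (hPQ : P ⊆ Q) {hxP : x ∈ P}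
    {hxQ : x ∈ Q} :
    hP.twoSidedDirections hxP ≤ hQ.twoSidedDirections hxQ :=
  fun _ ⟨ε, hε, hu⟩ => ⟨ε, hε, fun t ht => hPQ (hu t ht)⟩

theorem inf_twoSidedDirections_le {hP : Convex ℝ P} {hQ : Convex ℝ Q} {hxP : x ∈ P}
    {hxQ : x ∈ Q} :
    hP.twoSidedDirections hxP ⊓ hQ.twoSidedDirections hxQ ≤
      (hP.inter hQ).twoSidedDirections ⟨hxP, hxQ⟩ :=
  fun _ ⟨⟨ε₁, hε₁, hu₁⟩, ⟨ε₂, hε₂, hu₂⟩⟩ => ⟨min ε₁ ε₂, lt_min hε₁ hε₂, fun t ht =>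
    ⟨hu₁ t (ht.trans (min_le_left _ _)), hu₂ t (ht.trans (min_le_right _ _))⟩⟩

theorem _root_.IsExtreme.twoSidedDirections_le {C : Set V} (hC : Convex ℝ C) (hF : Convex ℝ F)
    (hCF : IsExtreme ℝ C F) (hx : x ∈ F) :
    hC.twoSidedDirections (hCF.subset hx) ≤ hF.twoSidedDirections hx := by
  intro u hu
  obtain ⟨ε, hε, hadd, hsub⟩ := Convex.exists_add_sub_mem_of_mem_twoSidedDirections hu
  have hseg : x ∈ openSegment ℝ (x + ε • u) (x - ε • u) :=
    ⟨1 / 2, 1 / 2, by norm_num, by norm_num, by norm_num, by module⟩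
  exact hF.mem_twoSidedDirections_of_add_smul_of_sub_smul hx hε hε
    (hCF.left_mem_of_mem_openSegment hadd hsub hx hseg)
    (hCF.right_mem_of_mem_openSegment hadd hsub hx hseg)

def minimalFace (hP : Convex ℝ P) (hx : x ∈ P) : Set V :=
  P ∩ AffineSubspace.mk' x (hP.twoSidedDirections hx)

theorem mem_minimalFace {hP : Convex ℝ P} {hx : x ∈ P} :
    y ∈ hP.minimalFace hx ↔ y ∈ P ∧ y - x ∈ hP.twoSidedDirections hx := by
  rw [minimalFace, mem_inter_iff, SetLike.mem_coe, AffineSubspace.mem_mk', vsub_eq_sub]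

theorem self_mem_minimalFace (hP : Convex ℝ P) (hx : x ∈ P) : x ∈ hP.minimalFace hx :=
  ⟨hx, AffineSubspace.self_mem_mk' _ _⟩

theorem convex_minimalFace (hP : Convex ℝ P) (hx : x ∈ P) : Convex ℝ (hP.minimalFace hx) :=
  hP.inter (AffineSubspace.convex _)

theorem affineSpan_minimalFace (hP : Convex ℝ P) (hx : x ∈ P) :
    affineSpan ℝ (hP.minimalFace hx) = AffineSubspace.mk' x (hP.twoSidedDirections hx) := by
  refine le_antisymm (affineSpan_le.2 inter_subset_right) fun y hy => ?_
  rw [AffineSubspace.mem_mk', vsub_eq_sub] at hy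
  obtain ⟨ε, hε, hadd, -⟩ := exists_add_sub_mem_of_mem_twoSidedDirections hy
  have hface : x + ε • (y - x) ∈ hP.minimalFace hx :=
    mem_minimalFace.2 ⟨hadd, by simpa using Submodule.smul_mem _ ε hy⟩
  have hdir : ε • (y - x) ∈ (affineSpan ℝ (hP.minimalFace hx)).direction := by
    simpa using AffineSubspace.vsub_mem_direction (subset_affineSpan ℝ _ hface)
      (subset_affineSpan ℝ _ (hP.self_mem_minimalFace hx))
  simpa using AffineSubspace.vadd_mem_of_mem_direction
    ((Submodule.smul_mem_iff _ hε.ne').1 hdir)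
    (subset_affineSpan ℝ _ (hP.self_mem_minimalFace hx))

theorem isExtreme_minimalFace (hP : Convex ℝ P) (hx : x ∈ P) :
    IsExtreme ℝ P (hP.minimalFace hx) := by
  refine ⟨inter_subset_left, fun a ha b hb z hz ⟨α, β, hα, hβ, hαβ, hzab⟩ => ?_⟩
  obtain ⟨-, hz⟩ := mem_minimalFace.1 hz
  refine mem_minimalFace.2 ⟨ha, ?_⟩
  obtain ⟨ε, hε, -, hp⟩ := exists_add_sub_mem_of_mem_twoSidedDirections hz
  refine hP.mem_twoSidedDirections_of_add_smul_of_sub_smul hx one_pos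
    (δ' := ε * α / (1 + ε * β)) (by positivity) (by rwa [one_smul, add_sub_cancel]) ?_
  -- `x - δ' • (a - x)` is a convex combination of `x - ε • (z - x)` and `b`
  have := hP hp hb (a := 1 / (1 + ε * β)) (b := ε * β / (1 + ε * β)) (by positivity)
    (by positivity) (by field_simp)
  convert this using 1
  rw [← hzab, eq_sub_of_add_eq hαβ]
  match_scalars <;> field_simp <;> ring

theorem exists_twoSidedDirections_gt (hF : Convex ℝ F) (hx : x ∈ F) (hy : y ∈ F)
    (hyx : y - x ∉ hF.twoSidedDirections hx) :
    ∃ (x' : V) (hx' : x' ∈ F), hF.twoSidedDirections hx < hF.twoSidedDirections hx' := by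
  have hx' : (1 / 2 : ℝ) • x + (1 / 2 : ℝ) • y ∈ F :=
    hF hx hy (by norm_num) (by norm_num) (by norm_num)
  refine ⟨_, hx', SetLike.lt_iff_le_and_exists.2 ⟨fun u ⟨ε, hε, hu⟩ => ?_, y - x, ?_, hyx⟩⟩
  · refine ⟨ε / 2, by positivity, fun t ht => ?_⟩
    have := hF (hu (2 * t) (by rw [abs_mul, abs_two]; linarith)) hy
      (by norm_num : (0 : ℝ) ≤ 1 / 2) (by norm_num : (0 : ℝ) ≤ 1 / 2) (by norm_num)
    convert this using 1
    module
  · refine hF.mem_twoSidedDirections_of_add_smul_of_sub_smul hx' (δ := 1 / 2) (δ' := 1 / 2)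
      (by norm_num) (by norm_num) ?_ ?_
    · convert hy using 1; module
    · convert hx using 1; module

theorem exists_minimalFace_eq_self [FiniteDimensional ℝ V] (hF : Convex ℝ F)
    (hne : F.Nonempty) : ∃ (x : V) (hx : x ∈ F), hF.minimalFace hx = F := by
  obtain ⟨_, ⟨x, hx, rfl⟩, hmax⟩ := set_has_maximal_iff_noetherian.2 inferInstance
    {L | ∃ (x : V) (hx : x ∈ F), hF.twoSidedDirections hx = L}
    (let ⟨x, hx⟩ := hne; ⟨_, x, hx, rfl⟩)
  refine ⟨x, hx, inter_subset_left.antisymm fun y hy => mem_minimalFace.2 ⟨hy, ?_⟩⟩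
  by_contra hyx
  obtain ⟨x', hx', hlt⟩ := hF.exists_twoSidedDirections_gt hx hy hyx
  exact hmax _ ⟨x', hx', rfl⟩ hlt

theorem mem_twoSidedDirections_of_smul_add_smul (hP : Convex ℝ P) (hx : x ∈ P) {a b : ℝ}
    (hadd : x + (a • u + b • v) ∈ P) (hsub : x - (a • u + b • v) ∈ P)
    (hu : u ∈ hP.twoSidedDirections hx) (hb : b ≠ 0) : v ∈ hP.twoSidedDirections hx := by
  have hw := hP.mem_twoSidedDirections_of_add_of_sub hx hadd hsub
  have hbv : b • v ∈ hP.twoSidedDirections hx := by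
    simpa using Submodule.sub_mem _ hw (Submodule.smul_mem _ a hu)
  exact (Submodule.smul_mem_iff _ hb).1 hbv

theorem exists_add_notMem_of_notMem_twoSidedDirections (hP : Convex ℝ P) (hQ : Convex ℝ Q)
    (hxP : x ∈ P) (hxQ : x ∈ Q)
    (hu : u ∈ hP.twoSidedDirections hxP) (huQ : u ∉ hQ.twoSidedDirections hxQ) :
    ∃ w, x + w ∈ P ∧ x - w ∈ P ∧ w ∉ hQ.twoSidedDirections hxQ ∧ x + w ∉ Q := by
  obtain ⟨ε, hε, hadd, hsub⟩ := exists_add_sub_mem_of_mem_twoSidedDirections hu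
  have hεu : ε • u ∉ hQ.twoSidedDirections hxQ := by
    rwa [Submodule.smul_mem_iff _ hε.ne']
  by_cases hQadd : x + ε • u ∈ Q
  · refine ⟨-(ε • u), by rwa [← sub_eq_add_neg], by rwa [sub_neg_eq_add],
      by rwa [Submodule.neg_mem_iff], fun hQsub => hεu ?_⟩
    exact hQ.mem_twoSidedDirections_of_add_of_sub hxQ hQadd (by rwa [sub_eq_add_neg])
  · exact ⟨ε • u, hadd, hsub, hεu, hQadd⟩

theorem affineSpan_eq_affineSpan_minimalFace_of_le (hFPQ : IsExtreme ℝ (P ∩ Q) F)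
    (hF : Convex ℝ F) (hx : x ∈ F) (hFx : hF.minimalFace hx = F) (hP : Convex ℝ P)
    (hQ : Convex ℝ Q) (hxP : x ∈ P) (hxQ : x ∈ Q)
    (hle : hP.twoSidedDirections hxP ≤ hQ.twoSidedDirections hxQ) :
    affineSpan ℝ F = affineSpan ℝ (hP.minimalFace hxP) := by
  have hLF : hF.twoSidedDirections hx = hP.twoSidedDirections hxP :=
    le_antisymm (twoSidedDirections_mono fun y hy => (hFPQ.subset hy).1)
      ((le_inf le_rfl hle).trans
        (inf_twoSidedDirections_le.trans (hFPQ.twoSidedDirections_le (hP.inter hQ) hF hx)))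
  calc affineSpan ℝ F = affineSpan ℝ (hF.minimalFace hx) := by rw [hFx]
    _ = affineSpan ℝ (hP.minimalFace hxP) := by
      rw [affineSpan_minimalFace, affineSpan_minimalFace, hLF]

variable [TopologicalSpace V] [IsTopologicalAddGroup V] [ContinuousSMul ℝ V]

theorem exists_mem_segment_inter_of_convex_union (hPc : IsClosed P) (hQc : IsClosed Q)
    (hU : Convex ℝ (P ∪ Q)) {p q : V} (hp : p ∈ P) (hq : q ∈ Q) :
    ∃ z ∈ segment ℝ p q, z ∈ P ∩ Q :=
  isPreconnected_closed_iff.1 (convex_segment p q).isPreconnected P Q hPc hQc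
    (hU.segment_subset (Or.inl hp) (Or.inr hq))
    ⟨p, left_mem_segment ℝ p q, hp⟩ ⟨q, right_mem_segment ℝ p q, hq⟩

theorem twoSidedDirections_le_or_le (hP : Convex ℝ P) (hQ : Convex ℝ Q) (hPc : IsClosed P)
    (hQc : IsClosed Q) (hU : Convex ℝ (P ∪ Q)) (hxP : x ∈ P) (hxQ : x ∈ Q) :
    hP.twoSidedDirections hxP ≤ hQ.twoSidedDirections hxQ ∨
      hQ.twoSidedDirections hxQ ≤ hP.twoSidedDirections hxP := by
  by_contra! h
  obtain ⟨u, huP, huQ⟩ := SetLike.not_le_iff_exists.1 h.1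
  obtain ⟨v, hvQ, hvP⟩ := SetLike.not_le_iff_exists.1 h.2
  obtain ⟨u, huadd, husub, huQ, hxuQ⟩ :=
    exists_add_notMem_of_notMem_twoSidedDirections hP hQ hxP hxQ huP huQ
  obtain ⟨v, hvadd, hvsub, hvP, hxvP⟩ :=
    exists_add_notMem_of_notMem_twoSidedDirections hQ hP hxQ hxP hvQ hvP
  obtain ⟨z, ⟨a, b, ha, hb, hab, rfl⟩, hzP, hzQ⟩ :=
    exists_mem_segment_inter_of_convex_union hPc hQc hU huadd hvadd
  have hz : a • (x + u) + b • (x + v) = x + (a • u + b • v) := by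
    linear_combination (norm := module) hab • x
  have hopp : x - (a • u + b • v) ∈ P ∪ Q := hU.segment_subset (Or.inl husub) (Or.inr hvsub)
    ⟨a, b, ha, hb, hab, by linear_combination (norm := module) hab • x⟩
  rcases hopp with hoppP | hoppQ
  · have hb0 : b ≠ 0 := by
      rintro rfl
      exact hxuQ (by simpa [show a = 1 by linarith] using hzQ)
    exact hvP (hP.mem_twoSidedDirections_of_smul_add_smul hxP (hz ▸ hzP) hoppP
      (hP.mem_twoSidedDirections_of_add_of_sub hxP huadd husub) hb0)
  · have ha0 : a ≠ 0 := by
      rintro rfl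
      exact hxvP (by simpa [show b = 1 by linarith] using hzP)
    rw [add_comm (a • u)] at hz hoppQ
    exact huQ (hQ.mem_twoSidedDirections_of_smul_add_smul hxQ (hz ▸ hzQ) hoppQ
      (hQ.mem_twoSidedDirections_of_add_of_sub hxQ hvadd hvsub) ha0)

theorem exists_affineSpan_eq_affineSpan_minimalFace [FiniteDimensional ℝ V]
    (hP : Convex ℝ P) (hQ : Convex ℝ Q) (hPc : IsClosed P) (hQc : IsClosed Q)
    (hU : Convex ℝ (P ∪ Q)) (hFPQ : IsExtreme ℝ (P ∩ Q) F) (hF : Convex ℝ F)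
    (hne : F.Nonempty) :
    ∃ (x : V) (hxP : x ∈ P) (hxQ : x ∈ Q),
      affineSpan ℝ F = affineSpan ℝ (hP.minimalFace hxP) ∨
        affineSpan ℝ F = affineSpan ℝ (hQ.minimalFace hxQ) := by
  obtain ⟨x, hx, hFx⟩ := hF.exists_minimalFace_eq_self hne
  obtain ⟨hxP, hxQ⟩ := hFPQ.subset hx
  refine ⟨x, hxP, hxQ, ?_⟩
  rcases hP.twoSidedDirections_le_or_le hQ hPc hQc hU hxP hxQ with hle | hle
  · exact .inl (affineSpan_eq_affineSpan_minimalFace_of_le hFPQ hF hx hFx hP hQ hxP hxQ hle)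
  · rw [inter_comm] at hFPQ
    exact .inr (affineSpan_eq_affineSpan_minimalFace_of_le hFPQ hF hx hFx hQ hP hxQ hxP hle)

end Convex

section Polytope

variable {V : Type*} [NormedAddCommGroup V] [NormedSpace ℝ V] [FiniteDimensional ℝ V]

theorem exists_dual_eq_on_minimalFace_lt_off {S : Set V} (hS : S.Finite) {x : V}
    (hx : x ∈ convexHull ℝ S) : ∃ f : StrongDual ℝ V,
      (∀ y ∈ (convex_convexHull ℝ S).minimalFace hx, f y = f x) ∧
      ∀ s ∈ S \ (convex_convexHull ℝ S).minimalFace hx, f s < f x := by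
  set G := (convex_convexHull ℝ S).minimalFace hx
  set A := AffineSubspace.mk' x ((convex_convexHull ℝ S).twoSidedDirections hx)
  have hxA : x ∈ A := AffineSubspace.self_mem_mk' _ _
  have hK : convexHull ℝ (S \ G) ⊆ convexHull ℝ S \ G :=
    convexHull_min (fun s hs => ⟨subset_convexHull ℝ S hs.1, hs.2⟩)
      (((convex_convexHull ℝ S).isExtreme_minimalFace hx).convex_sdiff (convex_convexHull ℝ S))
  obtain ⟨f, u, v, hfK, huv, hfA⟩ := geometric_hahn_banach_compact_closed
    (convex_convexHull ℝ _) (hS.sdiff.isCompact_convexHull ℝ) A.convex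
    A.closed_of_finiteDimensional
    (disjoint_left.2 fun y hyK hyA => (hK hyK).2 ⟨(hK hyK).1, hyA⟩)
  have hfA' : ∀ y ∈ A, f y = f x := fun y hy =>
    A.apply_eq_of_forall_lt_apply f.toLinearMap hfA hxA hy
  refine ⟨f, fun y hy => hfA' y hy.2, fun s hs => ?_⟩
  linarith [hfK s (subset_convexHull ℝ _ hs), hfA x hxA]

theorem isExposed_minimalFace_convexHull {S : Set V} (hS : S.Finite) {x : V}
    (hx : x ∈ convexHull ℝ S) :
    IsExposed ℝ (convexHull ℝ S) ((convex_convexHull ℝ S).minimalFace hx) := by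
  set P := convexHull ℝ S
  set G := (convex_convexHull ℝ S).minimalFace hx
  obtain ⟨f, hfG, hfS⟩ := exists_dual_eq_on_minimalFace_lt_off hS hx
  have hfP : ∀ y ∈ P, f y ≤ f x := by
    refine convexHull_min (fun s hs => ?_) (convex_halfSpace_le f.toLinearMap.isLinear (f x))
    by_cases hsG : s ∈ G
    · exact (hfG s hsG).le
    · exact (hfS s ⟨hs, hsG⟩).le
  refine fun _ => ⟨f, Subset.antisymm (fun y hy => ⟨hy.1, fun z hz =>
    (hfP z hz).trans (hfG y hy).ge⟩) ?_⟩
  have hPE : IsExposed ℝ P (f.toExposed P) := ContinuousLinearMap.toExposed.isExposed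
  have hPcpt : IsCompact P := hS.isCompact_convexHull ℝ
  change f.toExposed P ⊆ G
  rw [← closure_convexHull_extremePoints (hPE.isCompact hPcpt)
    (hPE.convex (convex_convexHull ℝ S))]
  refine closure_minimal (convexHull_min (fun s hs => ?_)
    ((convex_convexHull ℝ S).convex_minimalFace hx))
    (hPcpt.isClosed.inter (AffineSubspace.closed_of_finiteDimensional _))
  have hsS : s ∈ S := extremePoints_convexHull_subset (hPE.isExtreme.extremePoints_eq ▸ hs).2
  by_contra hsG
  exact (hfS s ⟨hsS, hsG⟩).not_ge (hs.1.2 x hx)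

end Polytope

section Face

variable {d : ℕ} {C F G : Set (EuclideanSpace ℝ (Fin d))}

theorem IsFaceOf.isExtreme (h : IsFaceOf F C) : IsExtreme ℝ C F := by
  rcases h with rfl | ⟨f, c, -, hfC, rfl⟩
  · exact IsExtreme.rfl
  refine ⟨fun y hy => hy.1, fun a ha b hb z hz ⟨α, β, hα, hβ, hαβ, hzab⟩ => ⟨ha, ?_⟩⟩
  have hfz : α * f a + β * f b = c := by simpa [← hzab] using hz.2
  obtain rfl : β = 1 - α := by linarith
  by_contra hne
  nlinarith [mul_lt_mul_of_pos_left (lt_of_le_of_ne (hfC a ha) hne) hα,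
    mul_le_mul_of_nonneg_left (hfC b hb) hβ.le]

theorem IsFaceOf.convex_s2 (h : IsFaceOf F C) (hC : Convex ℝ C) : Convex ℝ F := by
  rcases h with rfl | ⟨f, c, -, -, rfl⟩
  · exact hC
  · exact hC.inter (convex_hyperplane f.isLinear c)

theorem IsExposed.isFaceOf (h : IsExposed ℝ C G) (hne : G.Nonempty) : IsFaceOf G C := by
  obtain ⟨l, rfl⟩ := h hne
  obtain ⟨g, hgC, hg⟩ := hne
  by_cases hl : l = 0
  · left
    simp [hl]
  · refine .inr ⟨l.toLinearMap, l g, fun h0 => hl (ContinuousLinearMap.coe_injective h0),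
      hg, Set.ext fun y => ⟨fun hy => ⟨hy.1, le_antisymm (hg y hy.1) (hy.2 g hgC)⟩,
        fun hy => ⟨hy.1, fun z hz => (hg z hz).trans hy.2.ge⟩⟩⟩

theorem IsFaceOf.empty_of_isCompact (h : IsFaceOf ∅ C) (hC : C.Nonempty) (hG : IsCompact G) :
    IsFaceOf ∅ G := by
  rcases h with h | ⟨f, -, hf, -, -⟩
  · exact absurd h.symm hC.ne_empty
  obtain ⟨M, hM⟩ := (hG.image f.continuous_of_finiteDimensional).bddAbove
  have hfM : ∀ y ∈ G, f y < M + 1 := fun y hy => (hM ⟨y, hy, rfl⟩).trans_lt (lt_add_one M)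
  exact .inr ⟨f, M + 1, hf, fun y hy => (hfM y hy).le,
    Set.ext fun y => ⟨fun h => h.elim, fun ⟨hy, hfy⟩ => (hfM y hy).ne hfy⟩⟩

end Face

/-- if `P ∪ Q` is convex and `F` is a `k`-dimensional face of `P ∩ Q`,
then some `k`-dimensional face `F'` of `P` or of `Q` has the same affine hull as `F`. -/
theorem face_of_inter {d k : ℕ} (P Q F : Set (EuclideanSpace ℝ (Fin d)))
    (hP : IsPolytope P) (hQ : IsPolytope Q) (hU : Convex ℝ (P ∪ Q))
    (hF : IsFaceOf F (P ∩ Q)) (hdim : dimSet F = k) :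
    ∃ F' : Set (EuclideanSpace ℝ (Fin d)),
      (IsFaceOf F' P ∨ IsFaceOf F' Q) ∧ dimSet F' = k ∧
      affineSpan ℝ F = affineSpan ℝ F' := by
  obtain ⟨S, ⟨s, hs⟩, rfl⟩ := hP
  obtain ⟨T, ⟨t, ht⟩, rfl⟩ := hQ
  have hPcpt := S.finite_toSet.isCompact_convexHull ℝ
  have hQcpt := T.finite_toSet.isCompact_convexHull ℝ
  rcases F.eq_empty_or_nonempty with rfl | hne
  · obtain ⟨z, -, hz⟩ := Convex.exists_mem_segment_inter_of_convex_union hPcpt.isClosed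
      hQcpt.isClosed hU (subset_convexHull ℝ _ hs) (subset_convexHull ℝ _ ht)
    exact ⟨∅, .inl (hF.empty_of_isCompact ⟨z, hz⟩ hPcpt), hdim, rfl⟩
  have hPconv := convex_convexHull ℝ (S : Set (EuclideanSpace ℝ (Fin d)))
  have hQconv := convex_convexHull ℝ (T : Set (EuclideanSpace ℝ (Fin d)))
  obtain ⟨x, hxP, hxQ, hspan | hspan⟩ := hPconv.exists_affineSpan_eq_affineSpan_minimalFace
    hQconv hPcpt.isClosed hQcpt.isClosed hU hF.isExtreme (hF.convex_s2 (hPconv.inter hQconv)) hne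
  · exact ⟨_, .inl ((isExposed_minimalFace_convexHull S.finite_toSet hxP).isFaceOf
      ⟨x, hPconv.self_mem_minimalFace hxP⟩), by rwa [dimSet, ← hspan], hspan⟩
  · exact ⟨_, .inr ((isExposed_minimalFace_convexHull T.finite_toSet hxQ).isFaceOf
      ⟨x, hQconv.self_mem_minimalFace hxQ⟩), by rwa [dimSet, ← hspan], hspan⟩
end

section
/- Let P and Q be convex polytopes in R^d whose union P ∪ Q is convex. Let E be a k-dimensional face of P such that no face of Q has the same affine hull direction (no face of Q is collinear with E). Then E is a k-dimensional face of P ∩ Q or of P ∪ Q. -/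
open Pointwise

/-!
If `A ∪ B` is convex, `B` is closed and `x ∈ A \ B`, then short segments from `x` towards any
point of `A ∪ B` stay in `A`, so `A ∪ B` has the same affine hull as `A`. Hence two closed sets
with convex union are nested or have the same affine hull. Apply this to `E` and the face `F` of
`Q` cut out by the supporting hyperplane of `E` (or `F = Q` when `E = P`): non-collinearity
leaves `E ⊆ F`, making `E` a face of `P ∩ Q`, or `F ⊆ E`, making `E` a face of `P ∪ Q`. If
instead `Q` crosses that hyperplane, the same segment argument puts `E` inside `Q`.
-/

open AffineMap Filter Topology

section ConvexUnion

variable {V : Type*} [NormedAddCommGroup V] [NormedSpace ℝ V] {A B : Set V}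

lemma exists_pos_lineMap_mem_of_convex_union (hB : IsClosed B) (hU : Convex ℝ (A ∪ B))
    {x y : V} (hx : x ∈ A ∪ B) (hxB : x ∉ B) (hy : y ∈ A ∪ B) :
    ∃ t : ℝ, 0 < t ∧ lineMap x y t ∈ A := by
  have hnear : ∀ᶠ t in 𝓝[>] (0 : ℝ), lineMap x y t ∉ B :=
    tendsto_nhdsWithin_of_tendsto_nhds
      (lineMap_continuous.tendsto' 0 x (lineMap_apply_zero x y))
      (hB.isOpen_compl.mem_nhds hxB)
  obtain ⟨t, htB, ht⟩ := (hnear.and (Ioo_mem_nhdsGT one_pos)).exists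
  have hseg : lineMap x y t ∈ A ∪ B := hU.lineMap_mem hx hy ⟨ht.1.le, ht.2.le⟩
  exact ⟨t, ht.1, hseg.resolve_right htB⟩

lemma affineSpan_union_eq_left_of_convex_union (hB : IsClosed B) (hU : Convex ℝ (A ∪ B))
    {x : V} (hx : x ∈ A) (hxB : x ∉ B) :
    affineSpan ℝ (A ∪ B) = affineSpan ℝ A := by
  refine le_antisymm (affineSpan_le.mpr fun y hy => ?_) (affineSpan_mono ℝ Set.subset_union_left)
  obtain ⟨t, ht, hmem⟩ := exists_pos_lineMap_mem_of_convex_union hB hU (.inl hx) hxB hy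
  have hy_eq : lineMap x (lineMap x y t) t⁻¹ = y := by
    rw [lineMap_lineMap_right, inv_mul_cancel₀ ht.ne', lineMap_apply_one]
  rw [SetLike.mem_coe, ← hy_eq]
  exact lineMap_mem _ (subset_affineSpan ℝ A hx) (subset_affineSpan ℝ A hmem)

lemma subset_or_subset_or_affineSpan_eq_of_convex_union (hA : IsClosed A) (hB : IsClosed B)
    (hU : Convex ℝ (A ∪ B)) : A ⊆ B ∨ B ⊆ A ∨ affineSpan ℝ A = affineSpan ℝ B := by
  refine or_iff_not_imp_left.mpr fun hAB => or_iff_not_imp_left.mpr fun hBA => ?_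
  obtain ⟨x, hxA, hxB⟩ := Set.not_subset.mp hAB
  obtain ⟨y, hyB, hyA⟩ := Set.not_subset.mp hBA
  rw [← affineSpan_union_eq_left_of_convex_union hB hU hxA hxB, Set.union_comm,
    affineSpan_union_eq_left_of_convex_union hA (Set.union_comm A B ▸ hU) hyB hyA]

lemma sep_subset_of_convex_union_of_lt (hB : IsClosed B) (hU : Convex ℝ (A ∪ B))
    {f : V →ₗ[ℝ] ℝ} {c : ℝ} (hfA : ∀ x ∈ A, f x ≤ c) {y : V} (hy : y ∈ B) (hcy : c < f y) :
    {x ∈ A | f x = c} ⊆ B := by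
  rintro x ⟨hxA, hfx⟩
  by_contra hxB
  obtain ⟨t, ht, hmem⟩ := exists_pos_lineMap_mem_of_convex_union hB hU (.inl hxA) hxB (.inr hy)
  have hf_line : f (lineMap x y t) = c + t * (f y - c) := by
    rw [lineMap_apply_module', map_add, map_smul, map_sub, hfx, smul_eq_mul]; ring
  linarith [hfA _ hmem, mul_pos ht (sub_pos.mpr hcy)]

end ConvexUnion

lemma IsPolytope.isClosed {d : ℕ} {P : Set (EuclideanSpace ℝ (Fin d))} (h : IsPolytope P) :
    IsClosed P := by
  obtain ⟨S, -, rfl⟩ := h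
  exact (S.finite_toSet.isCompact_convexHull (𝕜 := ℝ)).isClosed

lemma IsFaceOf.inter_of_subset {d : ℕ} {E P Q : Set (EuclideanSpace ℝ (Fin d))}
    (hE : IsFaceOf E P) (hEQ : E ⊆ Q) : IsFaceOf E (P ∩ Q) := by
  rcases hE with rfl | ⟨f, c, hf0, hfP, rfl⟩
  · exact .inl (Set.inter_eq_left.mpr hEQ).symm
  · refine .inr ⟨f, c, hf0, fun x hx => hfP x hx.1, ?_⟩
    ext x
    exact ⟨fun hx => ⟨⟨hx.1, hEQ hx⟩, hx.2⟩, fun hx => ⟨hx.1.1, hx.2⟩⟩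

/-- let `P ∪ Q` be convex and let `E` be a `k`-dimensional face of `P` such
that no face of `Q` is collinear with `E` (i.e. no face of `Q` has the same direction of
its affine hull). Then `E` is a `k`-dimensional face of `P ∩ Q` or of `P ∪ Q`. -/
theorem face_not_collinear {d k : ℕ} (P Q E : Set (EuclideanSpace ℝ (Fin d)))
    (hP : IsPolytope P) (hQ : IsPolytope Q) (hU : Convex ℝ (P ∪ Q))
    (hE : IsFaceOf E P) (hdim : dimSet E = k)
    (hnc : ∀ F : Set (EuclideanSpace ℝ (Fin d)), IsFaceOf F Q →
      (affineSpan ℝ F).direction ≠ (affineSpan ℝ E).direction) :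
    (IsFaceOf E (P ∩ Q) ∧ dimSet E = k) ∨ (IsFaceOf E (P ∪ Q) ∧ dimSet E = k) := by
  have nested : ∀ F, IsFaceOf F Q → IsClosed E → IsClosed F → Convex ℝ (E ∪ F) →
      E ⊆ F ∨ F ⊆ E := fun F hF hEc hFc hEF =>
    (subset_or_subset_or_affineSpan_eq_of_convex_union hEc hFc hEF).imp_right
      (Or.resolve_right · fun h => hnc F hF (congrArg _ h.symm))
  rcases hE with rfl | ⟨f, c, hf0, hfP, rfl⟩
  · rcases nested Q (.inl rfl) hP.isClosed hQ.isClosed hU with hEQ | hQE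
    · exact .inl ⟨IsFaceOf.inter_of_subset (.inl rfl) hEQ, hdim⟩
    · exact .inr ⟨.inl (Set.union_eq_left.mpr hQE).symm, hdim⟩
  by_cases hfQ : ∀ x ∈ Q, f x ≤ c
  · have hyper : IsClosed {x : EuclideanSpace ℝ (Fin d) | f x = c} :=
      isClosed_eq f.continuous_of_finiteDimensional continuous_const
    rcases nested {x ∈ Q | f x = c} (.inr ⟨f, c, hf0, hfQ, rfl⟩) (hP.isClosed.inter hyper)
        (hQ.isClosed.inter hyper)
        (Set.sep_union ▸ hU.inter (convex_hyperplane f.isLinear c)) with hEF | hFE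
    · exact .inl ⟨IsFaceOf.inter_of_subset (.inr ⟨f, c, hf0, hfP, rfl⟩) fun x hx => (hEF hx).1,
        hdim⟩
    · refine .inr ⟨.inr ⟨f, c, hf0, fun x hx => hx.elim (hfP x) (hfQ x), ?_⟩, hdim⟩
      exact (Set.union_eq_left.mpr hFE).symm.trans Set.sep_union.symm
  · push Not at hfQ
    obtain ⟨y, hy, hcy⟩ := hfQ
    exact .inl ⟨IsFaceOf.inter_of_subset (.inr ⟨f, c, hf0, hfP, rfl⟩)
      (sep_subset_of_convex_union_of_lt hQ.isClosed hU hfP hy hcy), hdim⟩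
end

section
/- Let C ⊆ R^d be a closed convex cone and let W ⊆ R^d be a linear subspace of dimension k ≥ 1 written as W = W⁺ ∪ W⁻, where W⁺ and W⁻ are the two closed half-subspaces of W bounded by a (k−1)-dimensional linear subspace V = W⁺ ∩ W⁻. Suppose there exist nonzero non-collinear points x ∈ C ∩ W⁺ and y ∈ C ∩ W⁻. Then C ∩ V ≠ {0}. -/
/-!
If `f x = 0` then `x` itself lies in `V`. Otherwise `z = (-f y) • x + (f x) • y` has nonnegative
coefficients, not both zero, so it lies in the cone `C`; it is killed by `f`, so it lies in `V`;
and it is nonzero because the non-collinear vectors `x`, `y` are linearly independent.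
-/

open Pointwise

theorem Convex.smul_add_smul_mem_of_pos_smul_eq {E : Type*} [AddCommGroup E] [Module ℝ E]
    {C : Set E} (hconv : Convex ℝ C) (hcone : ∀ t : ℝ, 0 < t → t • C = C) {x y : E}
    (hx : x ∈ C) (hy : y ∈ C) {a b : ℝ} (ha : 0 ≤ a) (hb : 0 ≤ b) (hab : 0 < a + b) :
    a • x + b • y ∈ C := by
  rw [← hcone _ hab, hconv.add_smul ha hb]
  exact Set.add_mem_add (Set.smul_mem_smul_set hx) (Set.smul_mem_smul_set hy)

theorem LinearMap.map_neg_smul_add_smul_eq_zero {R M : Type*} [CommRing R] [AddCommGroup M]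
    [Module R M] (f : M →ₗ[R] R) (x y : M) : f (-f y • x + f x • y) = 0 := by
  simp only [map_add, map_smul, smul_eq_mul]
  ring

theorem cone_meets_boundary_subspace_general {d : ℕ}
    (C : Set (EuclideanSpace ℝ (Fin d)))
    (hconv : Convex ℝ C) (hcone : ∀ t : ℝ, 0 < t → t • C = C)
    (W V : Submodule ℝ (EuclideanSpace ℝ (Fin d)))
    (f : EuclideanSpace ℝ (Fin d) →ₗ[ℝ] ℝ)
    (hV : (V : Set (EuclideanSpace ℝ (Fin d))) =
      (W : Set (EuclideanSpace ℝ (Fin d))) ∩ {x | f x = 0})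
    (x y : EuclideanSpace ℝ (Fin d))
    (hxC : x ∈ C) (hxW : x ∈ W) (hxf : 0 ≤ f x) (hx0 : x ≠ 0)
    (hyC : y ∈ C) (hyW : y ∈ W) (hyf : f y ≤ 0)
    (hnc : ∀ t : ℝ, y ≠ t • x) :
    ∃ z : EuclideanSpace ℝ (Fin d), z ∈ C ∧ z ∈ V ∧ z ≠ 0 := by
  have mem_V : ∀ z ∈ W, f z = 0 → z ∈ V := fun z hzW hzf => by
    rw [← SetLike.mem_coe, hV]
    exact ⟨hzW, hzf⟩
  rcases hxf.eq_or_lt with hfx | hfx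
  · exact ⟨x, hxC, mem_V x hxW hfx.symm, hx0⟩
  have hxy : LinearIndependent ℝ ![x, y] :=
    (LinearIndependent.pair_iff' hx0).2 fun t h => hnc t h.symm
  refine ⟨-f y • x + f x • y, ?_, ?_, fun h => ?_⟩
  · exact hconv.smul_add_smul_mem_of_pos_smul_eq hcone hxC hyC (neg_nonneg.2 hyf) hfx.le
      (by linarith)
  · exact mem_V _ (W.add_mem (W.smul_mem _ hxW) (W.smul_mem _ hyW))
      (f.map_neg_smul_add_smul_eq_zero x y)
  · exact hfx.ne' (LinearIndependent.pair_iff.1 hxy _ _ h).2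

/-- let `C ⊆ ℝ^d` be a closed convex cone, `W` a linear subspace of
dimension `k ≥ 1`, `V ⊆ W` a `(k-1)`-dimensional subspace cutting `W` into the two closed
half-subspaces `W⁺ = {x ∈ W | f x ≥ 0}` and `W⁻ = {x ∈ W | f x ≤ 0}`.  If there are
nonzero non-collinear points `x ∈ C ∩ W⁺` and `y ∈ C ∩ W⁻`, then `C ∩ V ≠ {0}`. -/
theorem cone_meets_boundary_subspace {d k : ℕ} (hk : 1 ≤ k)
    (C : Set (EuclideanSpace ℝ (Fin d)))
    (hconv : Convex ℝ C) (hcone : ∀ t : ℝ, 0 < t → t • C = C) (hcl : IsClosed C)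
    (W V : Submodule ℝ (EuclideanSpace ℝ (Fin d))) (hVW : V ≤ W)
    (hdW : Module.finrank ℝ W = k) (hdV : Module.finrank ℝ V = k - 1)
    (f : EuclideanSpace ℝ (Fin d) →ₗ[ℝ] ℝ)
    (hV : (V : Set (EuclideanSpace ℝ (Fin d))) =
      (W : Set (EuclideanSpace ℝ (Fin d))) ∩ {x | f x = 0})
    (x y : EuclideanSpace ℝ (Fin d))
    (hxC : x ∈ C) (hxW : x ∈ W) (hxf : 0 ≤ f x) (hx0 : x ≠ 0)
    (hyC : y ∈ C) (hyW : y ∈ W) (hyf : f y ≤ 0) (hy0 : y ≠ 0)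
    (hnc : ∀ t : ℝ, y ≠ t • x) :
    ∃ z : EuclideanSpace ℝ (Fin d), z ∈ C ∧ z ∈ V ∧ z ≠ 0 :=
  cone_meets_boundary_subspace_general C hconv hcone W V f hV x y hxC hxW hxf hx0 hyC hyW hyf hnc
end

section
/- For a polyhedral cone C ⊆ R^d, the alternating sum over dimensions of the face numbers satisfies: sum over i from 0 to d of (−1)^i f_i(C) equals (−1)^{dim C} if C is a linear subspace, and equals 0 otherwise, where f_i(C) is the number of i-dimensional faces of C. -/
open RealInnerProductSpace

/-- A polyhedral cone: a finite intersection of closed linear half-spaces. -/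
def IsPolyhedralCone {d : ℕ} (C : Set (EuclideanSpace ℝ (Fin d))) : Prop :=
  ∃ S : Finset (EuclideanSpace ℝ (Fin d)), C = {x | ∀ a ∈ S, ⟪a, x⟫ ≤ 0}

/-- A face of a cone `C`: either `C` itself or the intersection of `C` with a supporting
hyperplane through the origin. -/
def IsConeFaceOf {d : ℕ} (F C : Set (EuclideanSpace ℝ (Fin d))) : Prop :=
  F = C ∨ ∃ a : EuclideanSpace ℝ (Fin d), a ≠ 0 ∧ (∀ x ∈ C, ⟪a, x⟫ ≤ 0) ∧
    F = {x | x ∈ C ∧ ⟪a, x⟫ = 0}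

/-- The dimension of a cone: the dimension of its linear span. -/
noncomputable def coneDim {d : ℕ} (C : Set (EuclideanSpace ℝ (Fin d))) : ℕ :=
  Module.finrank ℝ (Submodule.span ℝ C)

/-- The number of (nonempty) `i`-dimensional faces of `C`. -/
noncomputable def fcount {d : ℕ} (i : ℕ) (C : Set (EuclideanSpace ℝ (Fin d))) : ℕ :=
  Set.ncard {F : Set (EuclideanSpace ℝ (Fin d)) |
    IsConeFaceOf F C ∧ F.Nonempty ∧ coneDim F = i}

/-!
The faces of `C = {x | ∀ i ∈ I, ⟪b i, x⟫ ≤ 0}` are indexed by the tight sets `J` of its points,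
the face with tight set `J` having dimension `n - rank J`. Cut `C` by the hyperplane of one more
constraint `t`: the points of `C` with tight set `J` lie on one side of it, or, when `t` is
independent of `J`, occur below, above and on it, the last ones with one more tight constraint.
Hence `χ(C ∩ {t ≤ 0}) + χ(C ∩ {t ≥ 0}) = χ(C) + χ(C ∩ {t = 0})`, and the right-hand side of
Euler's relation satisfies the same identity. By induction on the dimension (a lower-dimensional
cone lives in its span) and on the number of constraints, flipping the sign of one constraint
therefore negates the defect `χ - RHS`, so the alternating sum over all `2 ^ k` sign patterns of
their Euler characteristics is `2 ^ k` times the defect of `C`. In that sum a tight set `J ≠ ∅`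
cancels between two patterns that differ only at some `j ∈ J`, and the chambers (`J = ∅`) cancel
when every pattern is full-dimensional; a lower-dimensional pattern has zero defect by induction.
-/

namespace ConeEuler

open Module Submodule Filter Topology
open scoped Classical

section Faces

variable {E : Type*} [NormedAddCommGroup E] [InnerProductSpace ℝ E]

/-- `IsConeFaceOf` over any real inner product space, so that a cone can be studied inside a
subspace. -/
def IsFace (F C : Set E) : Prop :=
  F = C ∨ ∃ a : E, a ≠ 0 ∧ (∀ x ∈ C, ⟪a, x⟫ ≤ 0) ∧ F = {x | x ∈ C ∧ ⟪a, x⟫ = 0}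

noncomputable def dimSpan (C : Set E) : ℕ := finrank ℝ (span ℝ C)

noncomputable def eulerChar (C : Set E) : ℤ := ∑ᶠ F ∈ {F | IsFace F C}, (-1) ^ dimSpan F

noncomputable def subspaceSign (C : Set E) : ℤ :=
  if ∃ V : Submodule ℝ E, C = V then (-1) ^ dimSpan C else 0

theorem subspaceSign_of_not_exists {C : Set E} (h : ¬ ∃ V : Submodule ℝ E, C = V) :
    subspaceSign C = 0 := by
  rw [subspaceSign, if_neg h]

theorem dimSpan_le [FiniteDimensional ℝ E] (C : Set E) : dimSpan C ≤ finrank ℝ E :=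
  Submodule.finrank_le _

theorem dimSpan_insert_of_mem {v : E} {s : Set E} (h : v ∈ span ℝ s) :
    dimSpan (insert v s) = dimSpan s := by
  rw [dimSpan, dimSpan, span_insert_eq_span h]

theorem dimSpan_insert_of_notMem [FiniteDimensional ℝ E] {v : E} {s : Set E}
    (h : v ∉ span ℝ s) : dimSpan (insert v s) = dimSpan s + 1 := by
  rw [dimSpan, dimSpan, span_insert, sup_comm, finrank_sup_span_singleton h]

theorem dimSpan_insert_neg (v : E) (s : Set E) :
    dimSpan (insert (-v) s) = dimSpan (insert v s) := by
  rw [dimSpan, dimSpan, span_insert, span_insert, ← neg_one_smul ℝ v,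
    span_singleton_smul_eq isUnit_one.neg]

theorem setOf_inner_eq_zero (v : E) : {x | ⟪v, x⟫ = 0} = ((ℝ ∙ v)ᗮ : Set E) := by
  ext x
  exact mem_orthogonal_singleton_iff_inner_right.symm

theorem orthogonal_span_singleton_ne_top {v : E} (hv : v ≠ 0) : (ℝ ∙ v)ᗮ ≠ ⊤ := fun h => by
  have hmem : v ∈ (ℝ ∙ v)ᗮ := h ▸ Submodule.mem_top
  exact hv (inner_self_eq_zero.1 (mem_orthogonal_singleton_iff_inner_right.1 hmem))

theorem neg_one_pow_sub_succ {n d : ℕ} (h : d < n) :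
    (-1 : ℤ) ^ (n - (d + 1)) = -(-1) ^ (n - d) := by
  rw [show n - d = n - (d + 1) + 1 by omega, pow_succ]
  ring

theorem zero_mem_of_isFace {F C : Set E} (h0 : (0 : E) ∈ C) (hF : IsFace F C) : (0 : E) ∈ F := by
  rcases hF with rfl | ⟨a, -, -, rfl⟩
  exacts [h0, ⟨h0, inner_zero_right a⟩]

theorem isFace_submodule_iff {V : Submodule ℝ E} {F : Set E} : IsFace F V ↔ F = V := by
  refine ⟨?_, fun h => .inl h⟩
  rintro (h | ⟨a, -, ha, rfl⟩)
  · exact h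
  refine Set.Subset.antisymm (fun x hx => hx.1) fun x hx => ⟨hx, ?_⟩
  have := ha (-x) (V.neg_mem hx)
  rw [inner_neg_right] at this
  exact le_antisymm (ha x hx) (by linarith)

theorem eulerChar_submodule (V : Submodule ℝ E) :
    eulerChar (V : Set E) = subspaceSign (V : Set E) := by
  have : {F | IsFace F (V : Set E)} = {(V : Set E)} := Set.ext fun _ => isFace_submodule_iff
  rw [eulerChar, subspaceSign, this, finsum_mem_singleton, if_pos ⟨V, rfl⟩]

section Subtype

variable (W : Submodule ℝ E)

theorem image_subtype_preimage (X : Set E) : ((↑) : W → E) '' ((↑) ⁻¹' X) = X ∩ W := by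
  rw [Set.image_preimage_eq_inter_range, Subtype.range_coe_subtype]
  rfl

theorem dimSpan_image_subtype (F : Set W) : dimSpan (((↑) : W → E) '' F) = dimSpan F := by
  rw [dimSpan, dimSpan, ← W.coe_subtype, span_image, finrank_map_subtype_eq]

theorem isFace_image_subtype {F C : Set W} (h : IsFace F C) :
    IsFace (((↑) : W → E) '' F) ((↑) '' C) := by
  rcases h with rfl | ⟨a, ha, hC, rfl⟩
  · exact .inl rfl
  refine .inr ⟨a, by simpa using ha, by simpa using hC, ?_⟩
  ext x
  constructor
  · rintro ⟨y, ⟨hy, hay⟩, rfl⟩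
    exact ⟨⟨y, hy, rfl⟩, by simpa using hay⟩
  · rintro ⟨⟨y, hy, rfl⟩, hay⟩
    exact ⟨y, ⟨hy, by simpa using hay⟩, rfl⟩

theorem exists_isFace_of_isFace_image_subtype [W.HasOrthogonalProjection] {G : Set E} {C : Set W}
    (h : IsFace G ((↑) '' C)) : ∃ F, IsFace F C ∧ G = ((↑) : W → E) '' F := by
  rcases h with rfl | ⟨a, -, hC, rfl⟩
  · exact ⟨C, .inl rfl, rfl⟩
  set a' := W.orthogonalProjectionOnto a
  have inner_a' (y : W) : ⟪a', y⟫ = ⟪a, (y : E)⟫ :=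
    inner_orthogonalProjectionOnto_eq_of_mem_right y a
  have hG : {x | x ∈ ((↑) '' C : Set E) ∧ ⟪a, x⟫ = 0} = (↑) '' {y | y ∈ C ∧ ⟪a', y⟫ = 0} := by
    ext x
    constructor
    · rintro ⟨⟨y, hy, rfl⟩, hay⟩
      exact ⟨y, ⟨hy, by rwa [inner_a']⟩, rfl⟩
    · rintro ⟨y, ⟨hy, hay⟩, rfl⟩
      exact ⟨⟨y, hy, rfl⟩, by rwa [← inner_a']⟩
  rw [hG]
  by_cases ha' : a' = 0
  · refine ⟨C, .inl rfl, ?_⟩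
    congr 1
    ext y
    simp [ha']
  · exact ⟨_, .inr ⟨a', ha', fun y hy => by simpa [inner_a'] using hC _ ⟨y, hy, rfl⟩, rfl⟩, rfl⟩

theorem eulerChar_image_subtype [W.HasOrthogonalProjection] (C : Set W) :
    eulerChar (((↑) : W → E) '' C) = eulerChar C := by
  have hfaces :
      {G | IsFace G (((↑) : W → E) '' C)} = Set.image ((↑) : W → E) '' {F | IsFace F C} := by
    ext G
    constructor
    · intro hG
      obtain ⟨F, hF, rfl⟩ := exists_isFace_of_isFace_image_subtype W hG
      exact ⟨F, hF, rfl⟩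
    · rintro ⟨F, hF, rfl⟩
      exact isFace_image_subtype W hF
  rw [eulerChar, eulerChar, hfaces,
    finsum_mem_image (Set.image_injective.2 Subtype.coe_injective).injOn]
  simp only [dimSpan_image_subtype]

theorem subspaceSign_image_subtype (C : Set W) :
    subspaceSign (((↑) : W → E) '' C) = subspaceSign C := by
  have hsub : (∃ V : Submodule ℝ E, (↑) '' C = (V : Set E)) ↔ ∃ V : Submodule ℝ W, C = V := by
    constructor
    · rintro ⟨V, hV⟩
      refine ⟨V.comap W.subtype, ?_⟩
      rw [comap_coe, ← hV, coe_subtype, Set.preimage_image_eq _ Subtype.coe_injective]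
    · rintro ⟨V, rfl⟩
      exact ⟨V.map W.subtype, by simp⟩
  simp only [subspaceSign, dimSpan_image_subtype]
  by_cases h : ∃ V : Submodule ℝ W, C = V
  · rw [if_pos (hsub.2 h), if_pos h]
  · rw [if_neg (mt hsub.1 h), if_neg h]

end Subtype

end Faces

section SubspaceSignCut

variable {E : Type*} [NormedAddCommGroup E] [InnerProductSpace ℝ E]

theorem dimSpan_inter_hyperplane_add_one [FiniteDimensional ℝ E] (V : Submodule ℝ E) {t u : E}
    (hu : u ∈ V) (htu : ⟪t, u⟫ ≠ 0) :
    dimSpan ((V : Set E) ∩ {x | ⟪t, x⟫ = 0}) + 1 = dimSpan (V : Set E) := by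
  set f : V →ₗ[ℝ] ℝ := (innerₛₗ ℝ t).comp V.subtype
  have hrange : finrank ℝ (LinearMap.range f) = 1 := by
    rw [LinearMap.range_eq_top.2 fun r => ⟨(r / ⟪t, u⟫) • ⟨u, hu⟩, by
      simp [f, real_inner_smul_right, htu]⟩, finrank_top, finrank_self]
  have hker : (V : Set E) ∩ {x | ⟪t, x⟫ = 0} = ((LinearMap.ker f).map V.subtype : Set E) := by
    ext x
    simp [f, and_comm]
  rw [hker, dimSpan, dimSpan, span_eq, span_eq, finrank_map_subtype_eq,
    ← f.finrank_range_add_finrank_ker, hrange, add_comm]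

variable {C : Set E}

theorem not_exists_submodule_of_inner_neg {t u : E} (hu : u ∈ C) (htu : ⟪t, u⟫ < 0)
    (hC : ∀ x ∈ C, ⟪t, x⟫ ≤ 0) : ¬ ∃ V : Submodule ℝ E, C = V := by
  rintro ⟨V, rfl⟩
  have := hC (-u) (V.neg_mem hu)
  rw [inner_neg_right] at this
  linarith

variable (hadd : ∀ x ∈ C, ∀ y ∈ C, x + y ∈ C) (hsmul : ∀ c : ℝ, 0 ≤ c → ∀ x ∈ C, c • x ∈ C)
include hadd hsmul

theorem exists_submodule_eq_of_neg_mem (h0 : (0 : E) ∈ C) (hneg : ∀ x ∈ C, -x ∈ C) :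
    ∃ V : Submodule ℝ E, C = V := by
  refine ⟨⟨⟨⟨C, fun hx hy => hadd _ hx _ hy⟩, h0⟩, fun c x hx => ?_⟩, rfl⟩
  rcases le_or_gt 0 c with hc | hc
  · exact hsmul c hc x hx
  · simpa using hsmul (-c) (by linarith) (-x) (hneg x hx)

/-- For `u` below and `v` above the hyperplane, `⟪t, v⟫ • u - ⟪t, u⟫ • v` lies on it, and its
negative recombines with `v` (resp. `u`) into a positive multiple of `-u` (resp. `-v`). -/
theorem exists_submodule_of_inter_hyperplane {t u v : E} (hu : u ∈ C) (hv : v ∈ C)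
    (htu : ⟪t, u⟫ < 0) (htv : 0 < ⟪t, v⟫)
    (hD : ∃ W : Submodule ℝ E, C ∩ {x | ⟪t, x⟫ = 0} = W) : ∃ V : Submodule ℝ E, C = V := by
  obtain ⟨W, hW⟩ := hD
  have neg_mem_of_inner_eq_zero : ∀ z ∈ C, ⟪t, z⟫ = 0 → -z ∈ C := by
    intro z hz hzt
    have hzW : z ∈ (W : Set E) := hW ▸ ⟨hz, hzt⟩
    have hnegW : -z ∈ (W : Set E) := W.neg_mem hzW
    exact (hW ▸ hnegW : -z ∈ C ∩ {x | ⟪t, x⟫ = 0}).1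
  have neg_mem_of_sides : ∀ u ∈ C, ∀ v ∈ C, ⟪t, u⟫ < 0 → 0 < ⟪t, v⟫ → -u ∈ C ∧ -v ∈ C := by
    intro u hu v hv htu htv
    set z := ⟪t, v⟫ • u + (-⟪t, u⟫) • v
    have hz : -z ∈ C := by
      refine neg_mem_of_inner_eq_zero z
        (hadd _ (hsmul _ htv.le _ hu) _ (hsmul _ (by linarith) _ hv)) ?_
      simp only [z, inner_add_right, real_inner_smul_right]
      ring
    constructor
    · have e : -z + (-⟪t, u⟫) • v = ⟪t, v⟫ • -u := by simp only [z]; module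
      have := hsmul _ (inv_nonneg.2 htv.le) _ (hadd _ hz _ (hsmul (-⟪t, u⟫) (by linarith) v hv))
      rwa [e, inv_smul_smul₀ htv.ne'] at this
    · have e : -z + ⟪t, v⟫ • u = (-⟪t, u⟫) • -v := by simp only [z]; module
      have := hsmul _ (inv_nonneg.2 (neg_nonneg.2 htu.le)) _ (hadd _ hz _ (hsmul _ htv.le u hu))
      rwa [e, inv_smul_smul₀ (neg_ne_zero.2 htu.ne)] at this
  refine exists_submodule_eq_of_neg_mem hadd hsmul (by simpa using hsmul 0 le_rfl u hu) ?_
  intro x hx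
  rcases lt_trichotomy ⟪t, x⟫ 0 with h | h | h
  · exact (neg_mem_of_sides x hx v hv h htv).1
  · exact neg_mem_of_inner_eq_zero x hx h
  · exact (neg_mem_of_sides u hu x hx htu h).2

theorem subspaceSign_add_subspaceSign_inter_hyperplane [FiniteDimensional ℝ E] {t u v : E}
    (hu : u ∈ C) (hv : v ∈ C) (htu : ⟪t, u⟫ < 0) (htv : 0 < ⟪t, v⟫) :
    subspaceSign C + subspaceSign (C ∩ {x | ⟪t, x⟫ = 0}) = 0 := by
  by_cases hC : ∃ V : Submodule ℝ E, C = V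
  · obtain ⟨V, rfl⟩ := hC
    have hD : ∃ W : Submodule ℝ E, (V : Set E) ∩ {x | ⟪t, x⟫ = 0} = W :=
      ⟨V ⊓ LinearMap.ker (innerₛₗ ℝ t), by ext; simp⟩
    rw [subspaceSign, subspaceSign, if_pos ⟨V, rfl⟩, if_pos hD,
      ← dimSpan_inter_hyperplane_add_one V hu htu.ne, pow_succ]
    ring
  · rw [subspaceSign_of_not_exists hC, subspaceSign_of_not_exists
      (mt (exists_submodule_of_inter_hyperplane hadd hsmul hu hv htu htv) hC), add_zero]

theorem subspaceSign_cut [FiniteDimensional ℝ E] (t : E) :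
    subspaceSign (C ∩ {x | ⟪t, x⟫ ≤ 0}) + subspaceSign (C ∩ {x | 0 ≤ ⟪t, x⟫}) =
      subspaceSign C + subspaceSign (C ∩ {x | ⟪t, x⟫ = 0}) := by
  by_cases hpos : ∃ v ∈ C, 0 < ⟪t, v⟫
  swap
  · push Not at hpos
    have h₁ : C ∩ {x | ⟪t, x⟫ ≤ 0} = C := Set.inter_eq_left.2 hpos
    have h₂ : C ∩ {x | 0 ≤ ⟪t, x⟫} = C ∩ {x | ⟪t, x⟫ = 0} := by
      ext x
      simp only [Set.mem_inter_iff]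
      exact and_congr_right fun hx => ⟨fun h => le_antisymm (hpos x hx) h, fun h => h.ge⟩
    rw [h₁, h₂]
  by_cases hneg : ∃ u ∈ C, ⟪t, u⟫ < 0
  swap
  · push Not at hneg
    have h₁ : C ∩ {x | 0 ≤ ⟪t, x⟫} = C := Set.inter_eq_left.2 hneg
    have h₂ : C ∩ {x | ⟪t, x⟫ ≤ 0} = C ∩ {x | ⟪t, x⟫ = 0} := by
      ext x
      simp only [Set.mem_inter_iff]
      exact and_congr_right fun hx => ⟨fun h => le_antisymm h (hneg x hx), fun h => h.le⟩
    rw [h₁, h₂, add_comm]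
  obtain ⟨v, hv, htv⟩ := hpos
  obtain ⟨u, hu, htu⟩ := hneg
  have hbelow : ¬ ∃ V : Submodule ℝ E, C ∩ {x | ⟪t, x⟫ ≤ 0} = V :=
    not_exists_submodule_of_inner_neg ⟨hu, htu.le⟩ htu fun x hx => hx.2
  have habove : ¬ ∃ V : Submodule ℝ E, C ∩ {x | 0 ≤ ⟪t, x⟫} = V :=
    not_exists_submodule_of_inner_neg (t := -t) ⟨hv, htv.le⟩ (by simpa using htv)
      fun x hx => by simpa using hx.2
  rw [subspaceSign_of_not_exists hbelow, subspaceSign_of_not_exists habove, zero_add,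
    subspaceSign_add_subspaceSign_inter_hyperplane hadd hsmul hu hv htu htv]

end SubspaceSignCut

section Cone

variable {E : Type*} [NormedAddCommGroup E] [InnerProductSpace ℝ E] {ι : Type*}

/-- The constraints are indexed, so that flipping their signs never merges two of them. -/
def cone (b : ι → E) (I : Finset ι) : Set E := {x | ∀ i ∈ I, ⟪b i, x⟫ ≤ 0}

noncomputable def tightSet (b : ι → E) (I : Finset ι) (x : E) : Finset ι :=
  {i ∈ I | ⟪b i, x⟫ = 0}

def tightFace (b : ι → E) (I J : Finset ι) : Set E :=
  {x | x ∈ cone b I ∧ ∀ j ∈ J, ⟪b j, x⟫ = 0}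

def IsTightSet (b : ι → E) (I J : Finset ι) : Prop := ∃ x ∈ cone b I, tightSet b I x = J

def IsTightSetOn (b : ι → E) (I : Finset ι) (S : Set E) (J : Finset ι) : Prop :=
  ∃ x ∈ cone b I ∩ S, tightSet b I x = J

variable {b c : ι → E} {I J J' : Finset ι} {i : ι} {t x y : E}

theorem mem_tightSet : i ∈ tightSet b I x ↔ i ∈ I ∧ ⟪b i, x⟫ = 0 := Finset.mem_filter

theorem tightSet_subset : tightSet b I x ⊆ I := Finset.filter_subset _ _

theorem inner_lt_zero_of_notMem_tightSet (hx : x ∈ cone b I) (hi : i ∈ I)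
    (h : i ∉ tightSet b I x) : ⟪b i, x⟫ < 0 :=
  (hx i hi).lt_of_ne fun h' => h (mem_tightSet.2 ⟨hi, h'⟩)

theorem zero_mem_cone : (0 : E) ∈ cone b I := fun i _ => by simp

theorem add_mem_cone (hx : x ∈ cone b I) (hy : y ∈ cone b I) : x + y ∈ cone b I :=
  fun i hi => by rw [inner_add_right]; linarith [hx i hi, hy i hi]

theorem smul_mem_cone {c : ℝ} (hc : 0 ≤ c) (hx : x ∈ cone b I) : c • x ∈ cone b I :=
  fun i hi => by rw [real_inner_smul_right]; exact mul_nonpos_of_nonneg_of_nonpos hc (hx i hi)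

theorem mem_tightFace_tightSet (hx : x ∈ cone b I) : x ∈ tightFace b I (tightSet b I x) :=
  ⟨hx, fun _ hi => (mem_tightSet.1 hi).2⟩

theorem exists_pos_forall_add_mul_neg (T : Finset ι) {f : ι → ℝ} (g : ι → ℝ)
    (hf : ∀ i ∈ T, f i < 0) : ∃ ε : ℝ, 0 < ε ∧ ∀ i ∈ T, f i + ε * g i < 0 := by
  have : ∀ᶠ ε in 𝓝 (0 : ℝ), ∀ i ∈ T, f i + ε * g i < 0 := by
    refine (eventually_all_finset T).2 fun i hi => ?_
    have : Tendsto (fun ε : ℝ => f i + ε * g i) (𝓝 0) (𝓝 (f i)) :=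
      (continuous_const.add (continuous_id.mul continuous_const)).tendsto' 0 (f i) (by simp)
    exact this.eventually (gt_mem_nhds (hf i hi))
  obtain ⟨ε, hε, hpos⟩ := ((this.filter_mono nhdsWithin_le_nhds).and self_mem_nhdsWithin).exists
    (f := 𝓝[>] (0 : ℝ))
  exact ⟨ε, hpos, hε⟩

theorem exists_pos_add_smul_mem_cone {w : E} (hx : x ∈ cone b I)
    (hw : ∀ i ∈ tightSet b I x, ⟪b i, w⟫ = 0) :
    ∃ ε : ℝ, 0 < ε ∧ x + ε • w ∈ cone b I ∧ tightSet b I (x + ε • w) = tightSet b I x := by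
  obtain ⟨ε, hε, hlt⟩ := exists_pos_forall_add_mul_neg (I \ tightSet b I x) (fun i => ⟪b i, w⟫)
    fun i hi => inner_lt_zero_of_notMem_tightSet hx (Finset.mem_sdiff.1 hi).1
      (Finset.mem_sdiff.1 hi).2
  have key : ∀ i ∈ I, (i ∈ tightSet b I x ∧ ⟪b i, x + ε • w⟫ = 0) ∨
      (i ∉ tightSet b I x ∧ ⟪b i, x + ε • w⟫ < 0) := by
    intro i hi
    rw [inner_add_right, real_inner_smul_right]
    by_cases h : i ∈ tightSet b I x
    · exact .inl ⟨h, by rw [(mem_tightSet.1 h).2, hw i h]; ring⟩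
    · exact .inr ⟨h, hlt i (Finset.mem_sdiff.2 ⟨hi, h⟩)⟩
  refine ⟨ε, hε, fun i hi => ?_, Finset.ext fun i => ?_⟩
  · rcases key i hi with h | h
    exacts [h.2.le, h.2.le]
  · rw [mem_tightSet]
    constructor
    · rintro ⟨hi, h0⟩
      rcases key i hi with h | h
      exacts [h.1, absurd h0 h.2.ne]
    · intro h
      exact ⟨tightSet_subset h, ((key i (tightSet_subset h)).resolve_right fun h' => h'.1 h).2⟩

/-- The point is the sum of one witness of strict inequality per constraint. -/
theorem exists_forall_mem_tightSet_inner_eq_zero {G : Set E} (hG : G ⊆ cone b I) (h0 : 0 ∈ G)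
    (hadd : ∀ x ∈ G, ∀ y ∈ G, x + y ∈ G) :
    ∃ x ∈ G, ∀ i ∈ tightSet b I x, ∀ y ∈ G, ⟪b i, y⟫ = 0 := by
  have : ∀ i, ∃ y ∈ G, (∃ z ∈ G, ⟪b i, z⟫ < 0) → ⟪b i, y⟫ < 0 := by
    intro i
    by_cases h : ∃ z ∈ G, ⟪b i, z⟫ < 0
    · obtain ⟨z, hz, hzi⟩ := h
      exact ⟨z, hz, fun _ => hzi⟩
    · exact ⟨0, h0, fun h' => absurd h' h⟩
  choose w hwG hw using this
  have hsum : ∑ i ∈ I, w i ∈ G :=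
    Finset.sum_induction _ (· ∈ G) (fun x y hx hy => hadd x hx y hy) h0 fun i _ => hwG i
  refine ⟨_, hsum, fun i hi y hy => ?_⟩
  obtain ⟨hiI, hi0⟩ := mem_tightSet.1 hi
  rw [inner_sum, Finset.sum_eq_zero_iff_of_nonpos fun j hj => hG (hwG j) i hiI] at hi0
  refine le_antisymm (hG hy i hiI) (not_lt.1 fun hlt => ?_)
  exact (hw i ⟨y, hy, hlt⟩).ne (hi0 i hiI)

theorem span_tightFace_tightSet (hx : x ∈ cone b I) :
    span ℝ (tightFace b I (tightSet b I x)) = (span ℝ (b '' tightSet b I x))ᗮ := by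
  refine le_antisymm ?_ fun w hw => ?_
  · refine isOrtho_span.2 fun y hy u hu => ?_
    obtain ⟨j, hj, rfl⟩ := hu
    rw [real_inner_comm]
    exact hy.2 j hj
  · have hw' : ∀ i ∈ tightSet b I x, ⟪b i, w⟫ = 0 := fun i hi =>
      inner_right_of_mem_orthogonal (subset_span (Set.mem_image_of_mem b hi)) hw
    obtain ⟨ε, hε, hmem, htight⟩ := exists_pos_add_smul_mem_cone hx hw'
    have h₁ : x + ε • w ∈ span ℝ (tightFace b I (tightSet b I x)) := by
      rw [← htight]
      exact subset_span (mem_tightFace_tightSet hmem)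
    have h₂ := sub_mem h₁ (subset_span (mem_tightFace_tightSet hx))
    rw [add_sub_cancel_left] at h₂
    simpa [hε.ne'] using smul_mem _ ε⁻¹ h₂

theorem dimSpan_tightFace_tightSet [FiniteDimensional ℝ E] (hx : x ∈ cone b I) :
    dimSpan (tightFace b I (tightSet b I x)) = finrank ℝ E - dimSpan (b '' tightSet b I x) := by
  rw [dimSpan, span_tightFace_tightSet hx, dimSpan,
    ← (span ℝ (b '' tightSet b I x)).finrank_add_finrank_orthogonal, Nat.add_sub_cancel_left]

theorem isFace_tightFace (hJ : J ⊆ I) : IsFace (tightFace b I J) (cone b I) := by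
  have hsum : ∀ y ∈ cone b I, ⟪∑ j ∈ J, b j, y⟫ = 0 ↔ ∀ j ∈ J, ⟪b j, y⟫ = 0 := fun y hy => by
    rw [sum_inner, Finset.sum_eq_zero_iff_of_nonpos fun j hj => hy j (hJ hj)]
  by_cases h : ∑ j ∈ J, b j = 0
  · refine .inl (Set.Subset.antisymm (fun y hy => hy.1) fun y hy => ⟨hy, ?_⟩)
    exact (hsum y hy).1 (by simp [h])
  · refine .inr ⟨_, h, fun y hy => ?_, Set.ext fun y => ?_⟩
    · rw [sum_inner]
      exact Finset.sum_nonpos fun j hj => hy j (hJ hj)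
    · exact and_congr_right fun hy => (hsum y hy).symm

theorem exists_eq_tightFace_of_isFace {F : Set E} (hF : IsFace F (cone b I)) :
    ∃ x ∈ cone b I, F = tightFace b I (tightSet b I x) := by
  rcases hF with rfl | ⟨a, -, ha, rfl⟩
  · obtain ⟨x, hx, hvan⟩ := exists_forall_mem_tightSet_inner_eq_zero (le_refl (cone b I))
      zero_mem_cone fun _ hx _ hy => add_mem_cone hx hy
    exact ⟨x, hx, Set.Subset.antisymm (fun y hy => ⟨hy, fun i hi => hvan i hi y hy⟩)
      fun y hy => hy.1⟩
  · obtain ⟨x, hx, hvan⟩ := exists_forall_mem_tightSet_inner_eq_zero (b := b) (I := I)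
      (G := {x | x ∈ cone b I ∧ ⟪a, x⟫ = 0}) (fun y hy => hy.1) ⟨zero_mem_cone, by simp⟩
      fun x hx y hy => ⟨add_mem_cone hx.1 hy.1, by rw [inner_add_right, hx.2, hy.2, add_zero]⟩
    refine ⟨x, hx.1, Set.Subset.antisymm (fun y hy => ⟨hy.1, fun i hi => hvan i hi y hy⟩) ?_⟩
    rintro y ⟨hy, hyt⟩
    refine ⟨hy, le_antisymm (ha y hy) ?_⟩
    obtain ⟨ε, hε, hmem, -⟩ := exists_pos_add_smul_mem_cone (w := -y) hx.1
      fun i hi => by rw [inner_neg_right, hyt i hi, neg_zero]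
    have := ha _ hmem
    rw [inner_add_right, hx.2, real_inner_smul_right, inner_neg_right] at this
    nlinarith

theorem tightSet_eq_filter (hx : x ∈ cone b I) :
    tightSet b I x = {i ∈ I | ∀ y ∈ tightFace b I (tightSet b I x), ⟪b i, y⟫ = 0} := by
  ext i
  simp only [Finset.mem_filter, mem_tightSet]
  exact and_congr_right fun hi =>
    ⟨fun h y hy => hy.2 i (mem_tightSet.2 ⟨hi, h⟩), fun h => h x (mem_tightFace_tightSet hx)⟩

theorem injOn_tightFace : Set.InjOn (tightFace b I) {J | IsTightSet b I J} := by
  rintro _ ⟨x, hx, rfl⟩ _ ⟨y, hy, rfl⟩ h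
  rw [tightSet_eq_filter hx, tightSet_eq_filter hy, h]

theorem setOf_isFace_cone :
    {F | IsFace F (cone b I)} = tightFace b I '' {J | IsTightSet b I J} := by
  ext F
  constructor
  · intro hF
    obtain ⟨x, hx, rfl⟩ := exists_eq_tightFace_of_isFace hF
    exact ⟨_, ⟨x, hx, rfl⟩, rfl⟩
  · rintro ⟨_, ⟨x, hx, rfl⟩, rfl⟩
    exact isFace_tightFace tightSet_subset

theorem eulerChar_cone_eq_sum_tightFace :
    eulerChar (cone b I) = ∑ J ∈ I.powerset,
      if IsTightSet b I J then (-1) ^ dimSpan (tightFace b I J) else 0 := by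
  have hfin : {J | IsTightSet b I J} = ↑(I.powerset.filter (IsTightSet b I)) := by
    ext J
    simp only [Finset.coe_filter, Finset.mem_powerset]
    exact ⟨fun h => ⟨h.elim fun x hx => hx.2 ▸ tightSet_subset, h⟩, fun h => h.2⟩
  rw [eulerChar, setOf_isFace_cone, finsum_mem_image injOn_tightFace, hfin,
    finsum_mem_coe_finset, Finset.sum_filter]

theorem eulerChar_cone [FiniteDimensional ℝ E] :
    eulerChar (cone b I) = ∑ J ∈ I.powerset,
      if IsTightSet b I J then (-1) ^ (finrank ℝ E - dimSpan (b '' J)) else 0 := by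
  rw [eulerChar_cone_eq_sum_tightFace]
  refine Finset.sum_congr rfl fun J _ => ?_
  split_ifs with h
  · obtain ⟨x, hx, rfl⟩ := h
    rw [dimSpan_tightFace_tightSet hx]
  · rfl

theorem finite_setOf_isFace_cone (b : ι → E) (I : Finset ι) :
    {F | IsFace F (cone b I)}.Finite := by
  rw [setOf_isFace_cone]
  refine (I.powerset.finite_toSet.subset fun J hJ => ?_).image _
  obtain ⟨x, -, rfl⟩ := hJ
  exact Finset.mem_powerset.2 tightSet_subset

theorem cone_insert : cone b (insert i I) = cone b I ∩ {x | ⟪b i, x⟫ ≤ 0} := by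
  ext x
  simp [cone, and_comm]

theorem tightSet_insert (x : E) : tightSet b (insert i I) x =
    if ⟪b i, x⟫ = 0 then insert i (tightSet b I x) else tightSet b I x := by
  rw [tightSet, Finset.filter_insert]
  rfl

theorem cone_congr (h : ∀ j ∈ I, c j = b j) : cone c I = cone b I := by
  ext x
  exact forall₂_congr fun j hj => by rw [h j hj]

theorem tightSet_congr (h : ∀ j ∈ I, c j = b j) (x : E) : tightSet c I x = tightSet b I x :=
  Finset.filter_congr fun j hj => by rw [h j hj]

theorem isTightSetOn_congr (h : ∀ j ∈ I, c j = b j) (S : Set E) :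
    IsTightSetOn c I S J ↔ IsTightSetOn b I S J := by
  simp only [IsTightSetOn, cone_congr h, tightSet_congr h]

theorem isTightSet_iff_isTightSetOn_lt_eq_gt (t : E) :
    IsTightSet b I J ↔ IsTightSetOn b I {x | ⟪t, x⟫ < 0} J ∨
      IsTightSetOn b I {x | ⟪t, x⟫ = 0} J ∨ IsTightSetOn b I {x | 0 < ⟪t, x⟫} J := by
  constructor
  · rintro ⟨x, hx, rfl⟩
    rcases lt_trichotomy ⟪t, x⟫ 0 with h | h | h
    exacts [.inl ⟨x, ⟨hx, h⟩, rfl⟩, .inr (.inl ⟨x, ⟨hx, h⟩, rfl⟩),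
      .inr (.inr ⟨x, ⟨hx, h⟩, rfl⟩)]
  · rintro (⟨x, hx, rfl⟩ | ⟨x, hx, rfl⟩ | ⟨x, hx, rfl⟩) <;> exact ⟨x, hx.1, rfl⟩

theorem isTightSet_insert_iff (hi : i ∉ J') :
    IsTightSet b (insert i I) J' ↔ IsTightSetOn b I {x | ⟪b i, x⟫ < 0} J' := by
  rw [IsTightSet, cone_insert]
  constructor
  · rintro ⟨x, ⟨hx, hxi⟩, rfl⟩
    rw [tightSet_insert] at hi ⊢
    split_ifs at hi ⊢ with h
    · exact absurd (Finset.mem_insert_self _ _) hi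
    · exact ⟨x, ⟨hx, lt_of_le_of_ne hxi h⟩, rfl⟩
  · rintro ⟨x, ⟨hx, hxi : ⟪b i, x⟫ < 0⟩, rfl⟩
    exact ⟨x, ⟨hx, hxi.le⟩, by rw [tightSet_insert, if_neg hxi.ne]⟩

theorem isTightSet_insert_insert_iff (hiI : i ∉ I) (hi : i ∉ J') :
    IsTightSet b (insert i I) (insert i J') ↔ IsTightSetOn b I {x | ⟪b i, x⟫ = 0} J' := by
  rw [IsTightSet, cone_insert]
  have hiT (x : E) : i ∉ tightSet b I x := fun h => hiI (tightSet_subset h)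
  constructor
  · rintro ⟨x, ⟨hx, -⟩, hJ⟩
    rw [tightSet_insert] at hJ
    split_ifs at hJ with h
    · refine ⟨x, ⟨hx, h⟩, ?_⟩
      rw [← Finset.erase_insert (hiT x), hJ, Finset.erase_insert hi]
    · exact absurd (hJ ▸ Finset.mem_insert_self i J') (hiT x)
  · rintro ⟨x, ⟨hx, hxi : ⟪b i, x⟫ = 0⟩, rfl⟩
    exact ⟨x, ⟨hx, hxi.le⟩, by rw [tightSet_insert, if_pos hxi]⟩

theorem inner_eq_zero_of_mem_span_tightSet {x v : E} (hv : v ∈ span ℝ (b '' tightSet b I x)) :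
    ⟪v, x⟫ = 0 := by
  have : span ℝ (b '' tightSet b I x) ≤ (ℝ ∙ x)ᗮ := by
    refine span_le.2 ?_
    rintro _ ⟨j, hj, rfl⟩
    exact mem_orthogonal_singleton_iff_inner_left.2 (mem_tightSet.1 hj).2
  exact mem_orthogonal_singleton_iff_inner_left.1 (this hv)

theorem not_isTightSetOn_of_mem_span {S : Set E} (hS : ∀ x ∈ S, ⟪t, x⟫ ≠ 0)
    (ht : t ∈ span ℝ (b '' J')) : ¬ IsTightSetOn b I S J' := by
  rintro ⟨x, ⟨-, hxS⟩, rfl⟩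
  exact hS x hxS (inner_eq_zero_of_mem_span_tightSet ht)

/-- Perturb the point orthogonally to its tight constraints, in a direction `±w` seen by `t`. -/
theorem IsTightSetOn.lt_and_gt [FiniteDimensional ℝ E] (ht : t ∉ span ℝ (b '' J'))
    (h : IsTightSetOn b I {x | ⟪t, x⟫ = 0} J') :
    IsTightSetOn b I {x | ⟪t, x⟫ < 0} J' ∧ IsTightSetOn b I {x | 0 < ⟪t, x⟫} J' := by
  obtain ⟨x, ⟨hx, hxt : ⟪t, x⟫ = 0⟩, rfl⟩ := h
  obtain ⟨w, hw, htw⟩ : ∃ w ∈ (span ℝ (b '' tightSet b I x))ᗮ, ⟪t, w⟫ ≠ 0 := by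
    by_contra! h
    refine ht ?_
    rw [← orthogonal_orthogonal (span ℝ _), mem_orthogonal]
    exact fun w hw => by rw [real_inner_comm]; exact h w hw
  have hw' (s : ℝ) : ∀ j ∈ tightSet b I x, ⟪b j, s • w⟫ = 0 := fun j hj => by
    rw [real_inner_smul_right, inner_right_of_mem_orthogonal
      (subset_span (Set.mem_image_of_mem b hj)) hw, mul_zero]
  obtain ⟨ε, hε, hmem, htight⟩ := exists_pos_add_smul_mem_cone hx (hw' 1)
  obtain ⟨δ, hδ, hmem', htight'⟩ := exists_pos_add_smul_mem_cone hx (hw' (-1))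
  have h₁ : ⟪t, x + ε • (1 : ℝ) • w⟫ = ε * ⟪t, w⟫ := by
    simp [inner_add_right, real_inner_smul_right, hxt]
  have h₂ : ⟪t, x + δ • (-1 : ℝ) • w⟫ = -(δ * ⟪t, w⟫) := by
    simp [inner_add_right, real_inner_smul_right, hxt]
  rcases htw.lt_or_gt with hneg | hpos
  · exact ⟨⟨_, ⟨hmem, by simp only [Set.mem_ofPred_eq, h₁]; nlinarith⟩, htight⟩,
      ⟨_, ⟨hmem', by simp only [Set.mem_ofPred_eq, h₂]; nlinarith⟩, htight'⟩⟩
  · exact ⟨⟨_, ⟨hmem', by simp only [Set.mem_ofPred_eq, h₂]; nlinarith⟩, htight'⟩,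
      ⟨_, ⟨hmem, by simp only [Set.mem_ofPred_eq, h₁]; nlinarith⟩, htight⟩⟩

/-- The positive combination `⟪t, y⟫ • x - ⟪t, x⟫ • y` of a point below and a point above. -/
theorem IsTightSetOn.eq_zero_of_lt_of_gt (hneg : IsTightSetOn b I {x | ⟪t, x⟫ < 0} J')
    (hpos : IsTightSetOn b I {x | 0 < ⟪t, x⟫} J') : IsTightSetOn b I {x | ⟪t, x⟫ = 0} J' := by
  obtain ⟨x, ⟨hx, hxt : ⟪t, x⟫ < 0⟩, hJx⟩ := hneg
  obtain ⟨y, ⟨hy, hyt : 0 < ⟪t, y⟫⟩, rfl⟩ := hpos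
  refine ⟨⟪t, y⟫ • x + (-⟪t, x⟫) • y, ⟨add_mem_cone (smul_mem_cone hyt.le hx)
    (smul_mem_cone (by linarith) hy), ?_⟩, Finset.ext fun j => ?_⟩
  · show ⟪t, _⟫ = 0
    simp only [inner_add_right, real_inner_smul_right]
    ring
  · simp only [mem_tightSet, inner_add_right, real_inner_smul_right]
    refine ⟨fun ⟨hj, h0⟩ => ⟨hj, ?_⟩, fun ⟨hj, h0⟩ => ⟨hj, ?_⟩⟩
    · by_contra hne
      have h₁ := inner_lt_zero_of_notMem_tightSet hx hj (hJx ▸ fun h => hne (mem_tightSet.1 h).2)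
      have h₂ := inner_lt_zero_of_notMem_tightSet hy hj fun h => hne (mem_tightSet.1 h).2
      nlinarith
    · have h₁ := (mem_tightSet.1 (hJx ▸ mem_tightSet.2 ⟨hj, h0⟩ : j ∈ tightSet b I x)).2
      rw [h₁, h0]
      ring

theorem isTightSetOn_inner_eq_zero_iff [FiniteDimensional ℝ E] (ht : t ∉ span ℝ (b '' J')) :
    IsTightSetOn b I {x | ⟪t, x⟫ = 0} J' ↔
      IsTightSetOn b I {x | ⟪t, x⟫ < 0} J' ∧ IsTightSetOn b I {x | 0 < ⟪t, x⟫} J' :=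
  ⟨IsTightSetOn.lt_and_gt ht, fun h => h.1.eq_zero_of_lt_of_gt h.2⟩

theorem cone_empty : cone b ∅ = Set.univ := by
  ext
  simp [cone]

theorem cone_erase_of_eq_zero (hi : b i = 0) : cone b (I.erase i) = cone b I := by
  ext x
  refine ⟨fun hx j hj => ?_, fun hx j hj => hx j (Finset.mem_of_mem_erase hj)⟩
  by_cases hji : j = i
  · simp [hji, hi]
  · exact hx j (Finset.mem_erase.2 ⟨hji, hj⟩)

theorem subspaceSign_cone_of_span_eq_top (hspan : span ℝ (cone b I) = ⊤) (hi : i ∈ I)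
    (hbi : b i ≠ 0) : subspaceSign (cone b I) = 0 := by
  refine subspaceSign_of_not_exists ?_
  rintro ⟨V, hV⟩
  have hV' : V = ⊤ := by rw [← span_eq V, ← hV, hspan]
  have hmem : b i ∈ cone b I := by rw [hV, hV']; exact Submodule.mem_top
  exact hbi (real_inner_self_nonpos.1 (hmem i hi))

theorem isTightSet_empty_of_span_eq_top (hspan : span ℝ (cone b I) = ⊤)
    (hnz : ∀ i ∈ I, b i ≠ 0) : IsTightSet b I ∅ := by
  obtain ⟨x, hx, hvan⟩ := exists_forall_mem_tightSet_inner_eq_zero le_rfl zero_mem_cone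
    fun _ hx _ hy => add_mem_cone (b := b) (I := I) hx hy
  refine ⟨x, hx, Finset.eq_empty_of_forall_notMem fun i hi => hnz i (tightSet_subset hi) ?_⟩
  have hle : span ℝ (cone b I) ≤ (ℝ ∙ b i)ᗮ :=
    span_le.2 fun y hy => mem_orthogonal_singleton_iff_inner_right.2 (hvan i hi y hy)
  rw [hspan, top_le_iff] at hle
  have hmem : b i ∈ (ℝ ∙ b i)ᗮ := hle ▸ Submodule.mem_top
  exact inner_self_eq_zero.1 (mem_orthogonal_singleton_iff_inner_right.1 hmem)

end Cone

section Restrict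

variable {E : Type*} [NormedAddCommGroup E] [InnerProductSpace ℝ E] {ι : Type*}
  (W : Submodule ℝ E) [W.HasOrthogonalProjection] (b : ι → E) (I : Finset ι)

theorem cone_orthogonalProjectionOnto :
    cone (fun i => W.orthogonalProjectionOnto (b i)) I = (↑) ⁻¹' cone b I := by
  ext y
  simp [cone]

theorem tightSet_orthogonalProjectionOnto (y : W) :
    tightSet (fun i => W.orthogonalProjectionOnto (b i)) I y = tightSet b I y := by
  simp [tightSet]

theorem tightFace_orthogonalProjectionOnto (J : Finset ι) :
    tightFace (fun i => W.orthogonalProjectionOnto (b i)) I J = (↑) ⁻¹' tightFace b I J := by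
  ext y
  simp [tightFace, cone]

theorem image_cone_orthogonalProjectionOnto :
    ((↑) : W → E) '' cone (fun i => W.orthogonalProjectionOnto (b i)) I = cone b I ∩ W := by
  rw [cone_orthogonalProjectionOnto, image_subtype_preimage]

theorem isTightSet_orthogonalProjectionOnto_iff {J : Finset ι} :
    IsTightSet (fun i => W.orthogonalProjectionOnto (b i)) I J ↔ IsTightSetOn b I W J := by
  constructor
  · rintro ⟨y, hy, rfl⟩
    rw [cone_orthogonalProjectionOnto] at hy
    exact ⟨y, ⟨hy, y.2⟩, (tightSet_orthogonalProjectionOnto W b I y).symm⟩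
  · rintro ⟨x, ⟨hx, hxW⟩, rfl⟩
    refine ⟨⟨x, hxW⟩, ?_, tightSet_orthogonalProjectionOnto W b I _⟩
    rw [cone_orthogonalProjectionOnto]
    exact hx

end Restrict

section EulerCharCut

variable {E : Type*} [NormedAddCommGroup E] [InnerProductSpace ℝ E] [FiniteDimensional ℝ E]
  {ι : Type*} {b : ι → E} {I : Finset ι} {i : ι}

theorem eulerChar_cone_insert (hi : i ∉ I) :
    eulerChar (cone b (insert i I)) = ∑ J ∈ I.powerset,
      ((if IsTightSetOn b I {x | ⟪b i, x⟫ < 0} J then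
          (-1) ^ (finrank ℝ E - dimSpan (b '' J)) else 0) +
        (if IsTightSetOn b I {x | ⟪b i, x⟫ = 0} J then
          (-1) ^ (finrank ℝ E - dimSpan (insert (b i) (b '' J))) else 0)) := by
  rw [eulerChar_cone, Finset.sum_powerset_insert hi, ← Finset.sum_add_distrib]
  refine Finset.sum_congr rfl fun J hJ => ?_
  have hiJ : i ∉ J := fun h => hi (Finset.mem_powerset.1 hJ h)
  rw [isTightSet_insert_iff hiJ, isTightSet_insert_insert_iff hi hiJ, Finset.coe_insert,
    Set.image_insert_eq]

theorem eulerChar_cone_inter_hyperplane (hi : i ∉ I) :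
    eulerChar (cone b I ∩ {x | ⟪b i, x⟫ = 0}) = ∑ J ∈ I.powerset,
      if IsTightSetOn b I {x | ⟪b i, x⟫ = 0} J then
        (-1) ^ (finrank ℝ E - dimSpan (insert (b i) (b '' J))) else 0 := by
  set W := (ℝ ∙ b i)ᗮ
  have hW : {x | ⟪b i, x⟫ = 0} = (W : Set E) := setOf_inner_eq_zero (b i)
  rw [hW, ← image_cone_orthogonalProjectionOnto, eulerChar_image_subtype,
    eulerChar_cone_eq_sum_tightFace]
  refine Finset.sum_congr rfl fun J hJ => ?_
  rw [isTightSet_orthogonalProjectionOnto_iff]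
  refine if_ctx_congr Iff.rfl (fun hJW => ?_) fun _ => rfl
  have hiJ : i ∉ J := fun h => hi (Finset.mem_powerset.1 hJ h)
  obtain ⟨x, hx, hxJ⟩ := (isTightSet_insert_insert_iff hi hiJ).2 (hW ▸ hJW)
  have hface : ((↑) : W → E) '' tightFace (fun j => W.orthogonalProjectionOnto (b j)) I J =
      tightFace b (insert i I) (tightSet b (insert i I) x) := by
    rw [tightFace_orthogonalProjectionOnto, image_subtype_preimage, hxJ]
    ext y
    simp only [tightFace, cone_insert, Finset.forall_mem_insert, Set.mem_inter_iff,
      SetLike.mem_coe, W, mem_orthogonal_singleton_iff_inner_right]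
    constructor
    · rintro ⟨⟨hy, hyJ⟩, hyi⟩
      exact ⟨⟨hy, hyi.le⟩, hyi, hyJ⟩
    · rintro ⟨⟨hy, -⟩, hyi, hyJ⟩
      exact ⟨⟨hy, hyJ⟩, hyi⟩
  rw [← dimSpan_image_subtype, hface, dimSpan_tightFace_tightSet hx, hxJ, Finset.coe_insert,
    Set.image_insert_eq]

/-- The contributions of one tight set `J` of the cone to the four Euler characteristics of the
cut: `N`, `Z`, `P` say that `J` is the tight set of a point below, on, or above the hyperplane,
and `e`, `e'` are the signs of the faces with tight sets `J` and `J ∪ {i}`. -/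
theorem ite_add_ite_cut {N Z P T : Prop} [Decidable N] [Decidable Z] [Decidable P]
    [Decidable T] {e e' : ℤ} (hT : T ↔ N ∨ Z ∨ P)
    (h : (¬N ∧ ¬P ∧ e' = e) ∨ ((Z ↔ N ∧ P) ∧ e' = -e)) :
    ((if N then e else 0) + if Z then e' else 0) + ((if P then e else 0) + if Z then e' else 0) =
      (if T then e else 0) + if Z then e' else 0 := by
  simp only [hT]
  rcases h with ⟨hN, hP, rfl⟩ | ⟨hZ, rfl⟩
  · by_cases hZ : Z <;> simp [hN, hP, hZ]
  · by_cases hN : N <;> by_cases hP : P <;> simp [hN, hP, hZ]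

theorem eulerChar_cut (hi : i ∉ I) :
    eulerChar (cone b I ∩ {x | ⟪b i, x⟫ ≤ 0}) + eulerChar (cone b I ∩ {x | 0 ≤ ⟪b i, x⟫}) =
      eulerChar (cone b I) + eulerChar (cone b I ∩ {x | ⟪b i, x⟫ = 0}) := by
  set b' := Function.update b i (-b i)
  have hb' : ∀ j ∈ I, b' j = b j := fun j hj =>
    Function.update_of_ne (ne_of_mem_of_not_mem hj hi) _ _
  have hb'i : b' i = -b i := Function.update_self _ _ _
  have hup : cone b I ∩ {x | 0 ≤ ⟪b i, x⟫} = cone b' (insert i I) := by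
    rw [cone_insert, cone_congr hb', hb'i]
    ext x
    simp
  rw [← cone_insert, hup, eulerChar_cone_insert hi, eulerChar_cone_insert hi, eulerChar_cone,
    eulerChar_cone_inter_hyperplane hi, ← Finset.sum_add_distrib, ← Finset.sum_add_distrib]
  refine Finset.sum_congr rfl fun J hJ => ?_
  have himage : b' '' J = b '' J :=
    Set.image_congr fun j hj => hb' j (Finset.mem_powerset.1 hJ hj)
  simp only [isTightSetOn_congr hb', hb'i, inner_neg_left, neg_lt_zero, neg_eq_zero, himage,
    dimSpan_insert_neg]
  refine ite_add_ite_cut (isTightSet_iff_isTightSetOn_lt_eq_gt (b i)) ?_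
  by_cases hspan : b i ∈ span ℝ (b '' J)
  · exact .inl ⟨not_isTightSetOn_of_mem_span (fun x hx => hx.ne) hspan,
      not_isTightSetOn_of_mem_span (fun x hx => hx.ne') hspan,
      by rw [dimSpan_insert_of_mem hspan]⟩
  · have hle := dimSpan_le (insert (b i) (b '' J))
    rw [dimSpan_insert_of_notMem hspan] at hle
    exact .inr ⟨isTightSetOn_inner_eq_zero_iff hspan,
      by rw [dimSpan_insert_of_notMem hspan, neg_one_pow_sub_succ hle]⟩

end EulerCharCut

section SignFlip

variable {ι E : Type*}

noncomputable def signFlip [Neg E] (a : ι → E) (A : Finset ι) (i : ι) : E :=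
  if i ∈ A then -a i else a i

theorem signFlip_empty [Neg E] (a : ι → E) : signFlip a ∅ = a := by
  ext i
  simp [signFlip]

theorem signFlip_ne_zero [SubtractionMonoid E] {a : ι → E} {A : Finset ι} {i : ι} (h : a i ≠ 0) :
    signFlip a A i ≠ 0 := by
  unfold signFlip
  split_ifs <;> simpa

variable [NormedAddCommGroup E] [InnerProductSpace ℝ E] {a : ι → E} {I : Finset ι}

theorem tightSet_signFlip (A : Finset ι) (x : E) : tightSet (signFlip a A) I x = tightSet a I x :=
  Finset.filter_congr fun i _ => by unfold signFlip; split_ifs <;> simp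

theorem dimSpan_image_signFlip (A J : Finset ι) :
    dimSpan (signFlip a A '' J) = dimSpan (a '' J) := by
  have key : ∀ c d : ι → E, (∀ i, c i = d i ∨ c i = -d i) → span ℝ (c '' J) ≤ span ℝ (d '' J) :=
    fun c d h => span_le.2 <| by
      rintro _ ⟨i, hi, rfl⟩
      rcases h i with h | h <;> rw [h]
      exacts [subset_span ⟨i, hi, rfl⟩, neg_mem (subset_span ⟨i, hi, rfl⟩)]
  rw [dimSpan, dimSpan, le_antisymm (key _ _ fun i => ?_) (key _ _ fun i => ?_)] <;>
    unfold signFlip <;> split_ifs <;> simp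

theorem mem_cone_signFlip_insert_iff {A : Finset ι} {j : ι} {x : E} (hx : ⟪a j, x⟫ = 0) :
    x ∈ cone (signFlip a (insert j A)) I ↔ x ∈ cone (signFlip a A) I := by
  refine forall₂_congr fun i _ => ?_
  by_cases hij : i = j
  · subst hij
    unfold signFlip
    split_ifs <;> simp [hx]
  · simp [signFlip, Finset.mem_insert, hij]

theorem isTightSet_signFlip_insert_iff {A J : Finset ι} {j : ι} (hj : j ∈ J) :
    IsTightSet (signFlip a (insert j A)) I J ↔ IsTightSet (signFlip a A) I J := by
  have hzero : ∀ B : Finset ι, ∀ x, tightSet (signFlip a B) I x = J → ⟪a j, x⟫ = 0 :=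
    fun B x hx => (mem_tightSet.1 (by rw [← tightSet_signFlip B, hx]; exact hj)).2
  constructor <;> rintro ⟨x, hx, hxJ⟩ <;> refine ⟨x, ?_, by rwa [tightSet_signFlip] at hxJ ⊢⟩
  · exact (mem_cone_signFlip_insert_iff (hzero _ x hxJ)).1 hx
  · exact (mem_cone_signFlip_insert_iff (hzero _ x hxJ)).2 hx

theorem sum_powerset_neg_one_pow_card_mul_eq_zero {g : Finset ι → ℤ} {j : ι} (hj : j ∈ I)
    (hg : ∀ A ⊆ I.erase j, g (insert j A) = g A) :
    ∑ A ∈ I.powerset, (-1) ^ A.card * g A = 0 := by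
  rw [← Finset.insert_erase hj, Finset.sum_powerset_insert (Finset.notMem_erase j I),
    ← Finset.sum_add_distrib]
  refine Finset.sum_eq_zero fun A hA => ?_
  have hjA : j ∉ A := fun h => Finset.notMem_erase j I (Finset.mem_powerset.1 hA h)
  rw [hg A (Finset.mem_powerset.1 hA), Finset.card_insert_of_notMem hjA, pow_succ]
  ring

/-- A tight set `J ≠ ∅` contributes alike to `A` and to `A` with the sign of some `j ∈ J`
toggled, and `J = ∅` contributes to every `A`. -/
theorem sum_powerset_neg_one_pow_card_mul_eulerChar_signFlip [FiniteDimensional ℝ E]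
    (hI : I.Nonempty) (hchamber : ∀ A ⊆ I, IsTightSet (signFlip a A) I ∅) :
    ∑ A ∈ I.powerset, (-1) ^ A.card * eulerChar (cone (signFlip a A) I) = 0 := by
  simp only [eulerChar_cone, dimSpan_image_signFlip, Finset.mul_sum]
  rw [Finset.sum_comm]
  refine Finset.sum_eq_zero fun J hJ => ?_
  obtain ⟨j, hjI, htoggle⟩ : ∃ j ∈ I, ∀ A ⊆ I.erase j,
      (IsTightSet (signFlip a (insert j A)) I J ↔ IsTightSet (signFlip a A) I J) := by
    rcases J.eq_empty_or_nonempty with rfl | ⟨j, hj⟩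
    · obtain ⟨j, hj⟩ := hI
      refine ⟨j, hj, fun A hA => iff_of_true (hchamber _ ?_) (hchamber _ ?_)⟩
      · exact Finset.insert_subset hj (hA.trans (Finset.erase_subset j I))
      · exact hA.trans (Finset.erase_subset j I)
    · exact ⟨j, Finset.mem_powerset.1 hJ hj, fun A _ => isTightSet_signFlip_insert_iff hj⟩
  exact sum_powerset_neg_one_pow_card_mul_eq_zero hjI fun A hA => by
    rw [if_congr (htoggle A hA) rfl rfl]

end SignFlip

section Induction

variable {E : Type*} [NormedAddCommGroup E] [InnerProductSpace ℝ E] [FiniteDimensional ℝ E]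
  {ι : Type*} {a b : ι → E} {I : Finset ι} {i : ι}

variable (hlow : ∀ W : Submodule ℝ E, W ≠ ⊤ → ∀ (c : ι → W) (J : Finset ι),
  eulerChar (cone c J) = subspaceSign (cone c J))
include hlow

theorem eulerChar_cone_of_span_ne_top (hspan : span ℝ (cone b I) ≠ ⊤) :
    eulerChar (cone b I) = subspaceSign (cone b I) := by
  rw [← Set.inter_eq_left.2 (subset_span (R := ℝ) (s := cone b I)),
    ← image_cone_orthogonalProjectionOnto, eulerChar_image_subtype, subspaceSign_image_subtype]
  exact hlow _ hspan _ _

/-- `eulerChar` and `subspaceSign` satisfy the same cut identity, and they agree on the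
lower-dimensional hyperplane section. -/
theorem eulerChar_sub_subspaceSign_cut (hi : i ∉ I) (hbi : b i ≠ 0)
    (hI : eulerChar (cone b I) = subspaceSign (cone b I)) :
    eulerChar (cone b I ∩ {x | ⟪b i, x⟫ ≤ 0}) - subspaceSign (cone b I ∩ {x | ⟪b i, x⟫ ≤ 0}) =
      -(eulerChar (cone b I ∩ {x | 0 ≤ ⟪b i, x⟫}) -
        subspaceSign (cone b I ∩ {x | 0 ≤ ⟪b i, x⟫})) := by
  have hχ := eulerChar_cut (b := b) hi
  have hτ := subspaceSign_cut (C := cone b I) (fun _ hx _ hy => add_mem_cone hx hy)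
    (fun _ hc _ hx => smul_mem_cone hc hx) (b i)
  have hD : eulerChar (cone b I ∩ {x | ⟪b i, x⟫ = 0}) =
      subspaceSign (cone b I ∩ {x | ⟪b i, x⟫ = 0}) := by
    rw [setOf_inner_eq_zero, ← image_cone_orthogonalProjectionOnto, eulerChar_image_subtype,
      subspaceSign_image_subtype]
    exact hlow _ (orthogonal_span_singleton_ne_top hbi) _ _
  linarith

variable (hsmall : ∀ (c : ι → E) (J : Finset ι), J.card < I.card →
  eulerChar (cone c J) = subspaceSign (cone c J))
include hsmall

theorem eulerChar_sub_subspaceSign_signFlip (hnz : ∀ i ∈ I, a i ≠ 0) {A : Finset ι}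
    (hA : A ⊆ I) :
    eulerChar (cone (signFlip a A) I) - subspaceSign (cone (signFlip a A) I) =
      (-1) ^ A.card * (eulerChar (cone a I) - subspaceSign (cone a I)) := by
  induction A using Finset.induction_on with
  | empty => simp [signFlip_empty]
  | insert j A hjA ih =>
    have hjI : j ∈ I := hA (Finset.mem_insert_self j A)
    set c := signFlip a A
    have hcj : c j = a j := by simp [c, signFlip, hjA]
    have hagree : ∀ k ∈ I.erase j, signFlip a (insert j A) k = c k := fun k hk => by
      simp [c, signFlip, Finset.ne_of_mem_erase hk]
    have hbelow : cone c I = cone c (I.erase j) ∩ {x | ⟪a j, x⟫ ≤ 0} := by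
      rw [← hcj, ← cone_insert, Finset.insert_erase hjI]
    have habove :
        cone (signFlip a (insert j A)) I = cone c (I.erase j) ∩ {x | 0 ≤ ⟪a j, x⟫} := by
      rw [← Finset.insert_erase hjI, cone_insert, cone_congr hagree]
      ext x
      simp [signFlip]
    have hcut := eulerChar_sub_subspaceSign_cut hlow (Finset.notMem_erase j I) (hcj ▸ hnz j hjI)
      (hsmall c _ (Finset.card_erase_lt_of_mem hjI))
    rw [hcj, ← hbelow, ← habove, ih ((Finset.subset_insert j A).trans hA)] at hcut
    rw [Finset.card_insert_of_notMem hjA, pow_succ]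
    linarith

theorem eulerChar_cone_of_forall_span_signFlip_eq_top (hnz : ∀ i ∈ I, a i ≠ 0)
    (hI : I.Nonempty) (hfull : ∀ A ⊆ I, span ℝ (cone (signFlip a A) I) = ⊤) :
    eulerChar (cone a I) = subspaceSign (cone a I) := by
  obtain ⟨i₀, hi₀⟩ := hI
  have hsum := sum_powerset_neg_one_pow_card_mul_eulerChar_signFlip ⟨i₀, hi₀⟩ fun A hA =>
    isTightSet_empty_of_span_eq_top (hfull A hA) fun i hi => signFlip_ne_zero (hnz i hi)
  have hterm : ∀ A ∈ I.powerset, (-1) ^ A.card * eulerChar (cone (signFlip a A) I) =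
      eulerChar (cone a I) - subspaceSign (cone a I) := fun A hA => by
    have h := eulerChar_sub_subspaceSign_signFlip hlow hsmall hnz (Finset.mem_powerset.1 hA)
    rw [subspaceSign_cone_of_span_eq_top (hfull A (Finset.mem_powerset.1 hA)) hi₀
      (signFlip_ne_zero (hnz i₀ hi₀)), sub_zero] at h
    rw [h, ← mul_assoc, ← pow_add, Even.neg_one_pow ⟨_, rfl⟩, one_mul]
  rw [Finset.sum_congr rfl hterm, Finset.sum_const, Finset.card_powerset, nsmul_eq_mul] at hsum
  have h2 : ((2 ^ I.card : ℕ) : ℤ) ≠ 0 := by positivity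
  exact sub_eq_zero.1 ((mul_eq_zero.1 hsum).resolve_left h2)

theorem eulerChar_cone_of_lower : eulerChar (cone a I) = subspaceSign (cone a I) := by
  by_cases hzero : ∃ i ∈ I, a i = 0
  · obtain ⟨i, hi, hai⟩ := hzero
    rw [← cone_erase_of_eq_zero hai]
    exact hsmall _ _ (Finset.card_erase_lt_of_mem hi)
  push Not at hzero
  rcases I.eq_empty_or_nonempty with rfl | hI
  · rw [cone_empty, ← Submodule.top_coe (R := ℝ)]
    exact eulerChar_submodule ⊤
  by_cases hfull : ∀ A ⊆ I, span ℝ (cone (signFlip a A) I) = ⊤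
  · exact eulerChar_cone_of_forall_span_signFlip_eq_top hlow hsmall hzero hI hfull
  push Not at hfull
  obtain ⟨A, hA, hspan⟩ := hfull
  have h := eulerChar_sub_subspaceSign_signFlip hlow hsmall hzero hA
  rw [eulerChar_cone_of_span_ne_top hlow hspan, sub_self] at h
  exact sub_eq_zero.1 ((mul_eq_zero.1 h.symm).resolve_left (pow_ne_zero _ (by norm_num)))

end Induction

theorem eulerChar_cone_eq_subspaceSign {ι : Type*} {E : Type*} [NormedAddCommGroup E]
    [InnerProductSpace ℝ E] [FiniteDimensional ℝ E] (b : ι → E) (I : Finset ι) :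
    eulerChar (cone b I) = subspaceSign (cone b I) := by
  induction hE : finrank ℝ E using Nat.strong_induction_on generalizing E I with
  | _ n ihdim =>
    have hlow : ∀ W : Submodule ℝ E, W ≠ ⊤ → ∀ (c : ι → W) (J : Finset ι),
        eulerChar (cone c J) = subspaceSign (cone c J) := fun W hW c J =>
      ihdim _ (hE ▸ Submodule.finrank_lt hW) c J rfl
    induction hI : I.card using Nat.strong_induction_on generalizing b I with
    | _ k ihcard =>
      exact eulerChar_cone_of_lower hlow fun c J hJ => ihcard _ (hI ▸ hJ) c J rfl

theorem sum_range_neg_one_pow_mul_ncard {α : Type*} {s : Set α} (hs : s.Finite) (g : α → ℕ)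
    {n : ℕ} (hg : ∀ x ∈ s, g x ≤ n) :
    ∑ i ∈ Finset.range (n + 1), (-1 : ℤ) ^ i * ({x ∈ s | g x = i}.ncard : ℤ) =
      ∑ᶠ x ∈ s, (-1) ^ g x := by
  obtain ⟨t, rfl⟩ := hs.exists_finset_coe
  rw [finsum_mem_coe_finset, ← Finset.sum_fiberwise_of_maps_to (t := Finset.range (n + 1))
    (g := g) fun x hx => Finset.mem_range.2 (Nat.lt_succ_of_le (hg x hx))]
  refine Finset.sum_congr rfl fun i _ => ?_
  have hfiber : {x ∈ (t : Set α) | g x = i} = ↑(t.filter (g · = i)) := by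
    ext
    simp
  rw [hfiber, Set.ncard_coe_finset,
    Finset.sum_congr rfl fun x hx => by rw [(Finset.mem_filter.1 hx).2], Finset.sum_const,
    nsmul_eq_mul, mul_comm]

end ConeEuler

open Classical in
theorem euler_relation_polyhedral_cone {d : ℕ} (C : Set (EuclideanSpace ℝ (Fin d)))
    (hC : IsPolyhedralCone C) :
    (∑ i ∈ Finset.range (d + 1), (-1 : ℤ) ^ i * (fcount i C : ℤ)) =
      if ∃ V : Submodule ℝ (EuclideanSpace ℝ (Fin d)), C = (V : Set _) then
        (-1 : ℤ) ^ (coneDim C) else 0 := by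
  obtain ⟨S, rfl⟩ := hC
  have hfcount (i : ℕ) : fcount i {x | ∀ a ∈ S, ⟪a, x⟫ ≤ 0} =
      {F ∈ {F | ConeEuler.IsFace F (ConeEuler.cone id S)} | ConeEuler.dimSpan F = i}.ncard := by
    refine congrArg Set.ncard (Set.ext fun F => ⟨fun ⟨hF, _, hdim⟩ => ⟨hF, hdim⟩, ?_⟩)
    exact fun ⟨hF, hdim⟩ =>
      ⟨hF, ⟨0, ConeEuler.zero_mem_of_isFace ConeEuler.zero_mem_cone hF⟩, hdim⟩
  have hdim : ∀ F ∈ {F | ConeEuler.IsFace F (ConeEuler.cone id S)}, ConeEuler.dimSpan F ≤ d :=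
    fun F _ => (ConeEuler.dimSpan_le F).trans_eq finrank_euclideanSpace_fin
  simp only [hfcount]
  rw [ConeEuler.sum_range_neg_one_pow_mul_ncard (ConeEuler.finite_setOf_isFace_cone id S) _ hdim]
  exact ConeEuler.eulerChar_cone_eq_subspaceSign id S
end

section
/- Let Δ_h ⊂ R^3 be the Reeve tetrahedron with vertices (0,0,0), (0,1,0), (1,0,0), (1,1,h) for a positive integer h. Then the number of lattice points in nΔ_h equals (h/6)n^3 + n^2 + (2 − h/6)n + 1 for every positive integer n. -/
open Pointwise

/-- The Reeve tetrahedron `Δ_h = conv{(0,0,0), (0,1,0), (1,0,0), (1,1,h)} ⊂ ℝ³`. -/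
noncomputable def reeveTetrahedron (h : ℕ) : Set (Fin 3 → ℝ) :=
  convexHull ℝ {![0,0,0], ![0,1,0], ![1,0,0], ![1,1,(h : ℝ)]}

/-!
For `h > 0`, `nΔ_h` is cut out by `0 ≤ z ≤ h·min(x, y)` and `h(x + y - n) ≤ z`. So the lattice
points of `nΔ_h` lie over the square `[0, n]²`, and over `(a, b)` they form the segment
`h·max(0, a + b - n) ≤ z ≤ h·min(a, b)`, with `h·(min(a, b) - max(0, a + b - n)) + 1` points.
Summing over `b` gives `h·a(n - a) + n + 1`, and summing over `a` gives
`h·(n³ - n)/6 + (n + 1)²`.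
-/

open Finset

def reeveHalfspaces (h t : ℝ) : Set (Fin 3 → ℝ) :=
  {p | 0 ≤ p 2 ∧ p 2 ≤ h * p 0 ∧ p 2 ≤ h * p 1 ∧ h * (p 0 + p 1) ≤ p 2 + h * t}

section Geometry

variable {h t : ℝ}

lemma convex_reeveHalfspaces : Convex ℝ (reeveHalfspaces h t) := by
  rintro p ⟨hp₁, hp₂, hp₃, hp₄⟩ q ⟨hq₁, hq₂, hq₃, hq₄⟩ a b ha hb hab
  simp only [reeveHalfspaces, Set.mem_ofPred_eq, Pi.add_apply, Pi.smul_apply, smul_eq_mul]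
  refine ⟨by positivity, by nlinarith, by nlinarith, by nlinarith⟩

lemma smul_mem_reeveHalfspaces {c : ℝ} {p : Fin 3 → ℝ} (hc : 0 ≤ c)
    (hp : p ∈ reeveHalfspaces h t) : c • p ∈ reeveHalfspaces h (c * t) := by
  obtain ⟨hp₁, hp₂, hp₃, hp₄⟩ := hp
  simp only [reeveHalfspaces, Set.mem_ofPred_eq, Pi.smul_apply, smul_eq_mul]
  refine ⟨by positivity, by nlinarith, by nlinarith, by nlinarith⟩

end Geometry

lemma reeveTetrahedron_eq {h : ℕ} (hh : 0 < h) : reeveTetrahedron h = reeveHalfspaces h 1 := by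
  have hh' : (0 : ℝ) < h := by exact_mod_cast hh
  apply subset_antisymm
  · refine convexHull_min ?_ convex_reeveHalfspaces
    simp only [Set.insert_subset_iff, Set.singleton_subset_iff]
    refine ⟨?_, ?_, ?_, ?_⟩ <;> simp [reeveHalfspaces, hh'.le]
    linarith
  · rintro p ⟨hp₁, hp₂, hp₃, hp₄⟩
    -- barycentric coordinates of `p` with respect to the four vertices
    let w : Fin 4 → ℝ := ![1 - p 0 - p 1 + p 2 / h, p 1 - p 2 / h, p 0 - p 2 / h, p 2 / h]
    let v : Fin 4 → Fin 3 → ℝ := ![![0,0,0], ![0,1,0], ![1,0,0], ![1,1,(h : ℝ)]]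
    have hp : p = ∑ i, w i • v i := by
      ext j
      fin_cases j <;> simp [w, v, Fin.sum_univ_four]
      field_simp
    rw [hp]
    refine (convex_convexHull ℝ _).sum_mem (fun i _ => ?_) ?_ (fun i _ => subset_convexHull ℝ _ ?_)
    · have : p 2 / h ≤ p 0 := by rw [div_le_iff₀ hh']; linarith
      have : p 2 / h ≤ p 1 := by rw [div_le_iff₀ hh']; linarith
      have : p 0 + p 1 - 1 ≤ p 2 / h := by rw [le_div_iff₀ hh']; linarith
      fin_cases i <;> simp [w] <;> first | positivity | linarith
    · simp [w, Fin.sum_univ_four]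
    · fin_cases i <;> simp [v]

lemma smul_reeveTetrahedron {h : ℕ} (hh : 0 < h) {t : ℝ} (ht : 0 ≤ t) :
    t • reeveTetrahedron h = reeveHalfspaces h t := by
  apply subset_antisymm
  · rintro _ ⟨q, hq, rfl⟩
    rw [reeveTetrahedron_eq hh] at hq
    simpa using smul_mem_reeveHalfspaces ht hq
  rcases ht.eq_or_lt with rfl | ht
  · rintro p ⟨hp₁, hp₂, hp₃, hp₄⟩
    have hh' : (0 : ℝ) < h := by exact_mod_cast hh
    have : p = 0 := by
      ext j
      fin_cases j <;> simp <;> nlinarith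
    exact this ▸ ⟨![0, 0, 0], subset_convexHull ℝ _ (by simp), zero_smul ℝ _⟩
  · intro p hp
    rw [Set.mem_smul_set_iff_inv_smul_mem₀ ht.ne', reeveTetrahedron_eq hh]
    simpa [ht.ne'] using smul_mem_reeveHalfspaces (inv_nonneg.2 ht.le) hp

lemma reeve_ineqs_iff_mem_fiber {h a b z n : ℤ} (hh : 0 < h) :
    (0 ≤ z ∧ z ≤ h * a ∧ z ≤ h * b ∧ h * (a + b) ≤ z + h * n) ↔
      (a, b) ∈ Icc 0 n ×ˢ Icc 0 n ∧ z ∈ Set.Icc (h * max 0 (a + b - n)) (h * min a b) := by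
  simp only [mem_product, mem_Icc, Set.mem_Icc, mul_max_of_nonneg _ _ hh.le,
    mul_min_of_nonneg _ _ hh.le, mul_zero, max_le_iff, le_min_iff]
  constructor
  · rintro ⟨h₁, h₂, h₃, h₄⟩
    refine ⟨⟨⟨?_, ?_⟩, ?_, ?_⟩, ⟨?_, ?_⟩, h₂, h₃⟩ <;> nlinarith
  · rintro ⟨-, ⟨h₁, h₄⟩, h₂, h₃⟩
    exact ⟨h₁, h₂, h₃, by linarith⟩

lemma intCast_mem_smul_reeveTetrahedron_iff {h : ℕ} (hh : 0 < h) (n : ℕ) (x : Fin 3 → ℤ) :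
    (fun i => (x i : ℝ)) ∈ (n : ℝ) • reeveTetrahedron h ↔
      (x 0, x 1) ∈ Icc (0 : ℤ) n ×ˢ Icc (0 : ℤ) n ∧
        x 2 ∈ Set.Icc (h * max 0 (x 0 + x 1 - n)) (h * min (x 0) (x 1)) := by
  rw [smul_reeveTetrahedron hh n.cast_nonneg, ← reeve_ineqs_iff_mem_fiber (by exact_mod_cast hh)]
  simp only [reeveHalfspaces, Set.mem_ofPred_eq]
  norm_cast

theorem natCard_fiber_Icc (s : Finset (ℤ × ℤ)) (lo hi : ℤ × ℤ → ℤ) :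
    Nat.card {x : Fin 3 → ℤ | (x 0, x 1) ∈ s ∧ x 2 ∈ Set.Icc (lo (x 0, x 1)) (hi (x 0, x 1))} =
      ∑ q ∈ s, (hi q + 1 - lo q).toNat := by
  let e : {x : Fin 3 → ℤ | (x 0, x 1) ∈ s ∧ x 2 ∈ Set.Icc (lo (x 0, x 1)) (hi (x 0, x 1))} ≃
      Σ q : s, Set.Icc (lo q) (hi q) :=
    { toFun x := ⟨⟨(x.1 0, x.1 1), x.2.1⟩, ⟨x.1 2, x.2.2⟩⟩
      invFun y := ⟨![y.1.1.1, y.1.1.2, y.2], y.1.2, y.2.2⟩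
      left_inv x := by ext i; fin_cases i <;> rfl
      right_inv y := rfl }
  rw [Nat.card_congr e, Nat.card_sigma, ← sum_coe_sort s]
  simp

lemma sum_Icc_zero_natCast {M : Type*} [AddCommMonoid M] (n : ℕ) (f : ℤ → M) :
    ∑ k ∈ Icc (0 : ℤ) n, f k = ∑ k ∈ range (n + 1), f k := by
  rw [Int.Icc_eq_finset_map]
  simp

lemma sum_range_min_mul_two {a n : ℕ} (ha : a ≤ n) :
    (∑ b ∈ range (n + 1), min (a : ℤ) b) * 2 = a * (2 * n + 1 - a) := by
  induction n, ha using Nat.le_induction with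
  | base =>
    rw [sum_congr rfl fun b hb => min_eq_right (by have := mem_range.1 hb; omega)]
    have gauss : ((∑ b ∈ range (a + 1), b : ℕ) : ℤ) * 2 = (a + 1) * a := by
      exact_mod_cast sum_range_id_mul_two (a + 1)
    push_cast at gauss
    linarith
  | succ m hm ih =>
    rw [sum_range_succ, min_eq_left (by omega)]
    push_cast
    linarith

lemma sum_range_min_sub_max {a n : ℕ} (ha : a ≤ n) :
    ∑ b ∈ range (n + 1), (min (a : ℤ) b - max 0 ((a : ℤ) + b - n)) = a * (n - a) := by
  -- reflecting `b ↦ n - b` turns `max 0 (a + b - n)` into `a - min a b`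
  have reflect : ∑ b ∈ range (n + 1), max 0 ((a : ℤ) + b - n) =
      ∑ b ∈ range (n + 1), (a - min (a : ℤ) b) := by
    rw [← sum_range_reflect]
    refine sum_congr rfl fun b hb => ?_
    have := mem_range.1 hb
    omega
  rw [sum_sub_distrib, reflect, sum_sub_distrib, sum_const, card_range, nsmul_eq_mul]
  push_cast
  linarith [sum_range_min_mul_two ha]

lemma sum_range_mul_sub (n : ℕ) :
    (∑ a ∈ range (n + 1), (a : ℤ) * (n - a)) * 6 = (n + 1) * n * (n - 1) := by
  have (m : ℕ) : (∑ a ∈ range m, (a : ℤ) * (n - a)) * 6 = m * (m - 1) * (3 * n - 2 * m + 1) := by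
    induction m with
    | zero => simp
    | succ m ih => rw [sum_range_succ, add_mul, ih]; push_cast; ring
  rw [this]
  push_cast
  ring

lemma sum_card_reeve_fibers (h n : ℕ) :
    ((∑ q ∈ Icc (0 : ℤ) n ×ˢ Icc (0 : ℤ) n,
        (h * min q.1 q.2 + 1 - h * max 0 (q.1 + q.2 - n)).toNat : ℕ) : ℤ) =
      h * ∑ a ∈ range (n + 1), (a : ℤ) * (n - a) + (n + 1) ^ 2 := by
  have fiber (a b : ℕ) (ha : a ≤ n) (hb : b ≤ n) :
      (((h * min (a : ℤ) b + 1 - h * max 0 ((a : ℤ) + b - n)).toNat : ℕ) : ℤ) =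
        h * (min (a : ℤ) b - max 0 ((a : ℤ) + b - n)) + 1 := by
    have : 0 ≤ min (a : ℤ) b - max 0 ((a : ℤ) + b - n) := by omega
    rw [← Int.toNat_of_nonneg (add_nonneg (mul_nonneg h.cast_nonneg this) zero_le_one)]
    ring_nf
  push_cast
  rw [sum_product, sum_Icc_zero_natCast]
  simp_rw [sum_Icc_zero_natCast]
  calc _ = ∑ a ∈ range (n + 1), (h * ((a : ℤ) * (n - a)) + (n + 1)) := by
        refine sum_congr rfl fun a ha => ?_
        have ha := Nat.lt_succ_iff.1 (mem_range.1 ha)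
        rw [sum_congr rfl fun b hb => fiber a b ha (Nat.lt_succ_iff.1 (mem_range.1 hb)),
          sum_add_distrib, ← mul_sum, sum_range_min_sub_max ha]
        simp
    _ = _ := by
      rw [sum_add_distrib, mul_sum, sum_const, card_range]
      ring

theorem reeve_lattice_point_count_general (h n : ℕ) (hh : 0 < h) :
    (Nat.card {x : Fin 3 → ℤ |
        (fun i => (x i : ℝ)) ∈ (n : ℝ) • reeveTetrahedron h} : ℝ) =
      (h : ℝ) / 6 * n ^ 3 + n ^ 2 + (2 - (h : ℝ) / 6) * n + 1 := by
  simp_rw [intCast_mem_smul_reeveTetrahedron_iff hh]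
  have count := congrArg (· * 6) (sum_card_reeve_fibers h n)
  rw [← natCard_fiber_Icc, add_mul, mul_assoc, sum_range_mul_sub] at count
  generalize Nat.card _ = N at count ⊢
  have : (N : ℝ) * 6 = h * ((n + 1) * n * (n - 1)) + (n + 1) ^ 2 * 6 := by
    exact_mod_cast count
  linear_combination this / 6

/-- the number of lattice points of `nΔ_h` equals
`(h/6) n³ + n² + (2 - h/6) n + 1` for every positive integer `n`. -/
theorem reeve_lattice_point_count (h n : ℕ) (hh : 0 < h) (hn : 0 < n) :
    (Nat.card {x : Fin 3 → ℤ |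
        (fun i => (x i : ℝ)) ∈ (n : ℝ) • reeveTetrahedron h} : ℝ) =
      (h : ℝ) / 6 * n ^ 3 + n ^ 2 + (2 - (h : ℝ) / 6) * n + 1 :=
  reeve_lattice_point_count_general h n hh
end
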